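/- arXiv:math/0509366 — 3 statements merged into one kernel-verified Lean document; each statement's English description precedes it below -/
import Mathlib

section
/- Let E and F be sc-Banach spaces and U ⊆ E open. An sc⁰-map f : U → F is sc¹ (i.e. for every x ∈ U₁ there is a bounded linear operator Df(x) : E₀ → F₀ with ‖f(x+h) − f(x) − Df(x)h‖_{F₀}/‖h‖_{E₁} → 0 as h → 0 in E₁, and the tangent map Tf : TU → TF, Tf(x,h) = (f(x), Df(x)h), is sc⁰) if and only if the following two conditions hold: (1) for every m ≥ 1 the induced map f : Uₘ → F_{m−1} is of class C¹ (Fréchet), with continuous derivative map Uₘ → L(Eₘ, F_{m−1}); (2) for every m ≥ 1 and x ∈ Uₘ the derivative Df(x) extends to a bounded linear operator E_{m−1} → F_{m−1}, and the map Uₘ ⊕ E_{m−1} → F_{m−1}, (x,h) ↦ Df(x)h, is continuous. -/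
universe u v

/-- The data of an sc-scale on an ambient real vector space `E`:
a sequence of levels (submodules of `E`) together with a norm function for each level. -/
structure ScScale (E : Type u) [AddCommGroup E] [Module ℝ E] where
  level : ℕ → Submodule ℝ E
  lnorm : ℕ → E → ℝ

namespace ScScale

variable {E : Type u} {F : Type v} [AddCommGroup E] [Module ℝ E] [AddCommGroup F] [Module ℝ F]

/-- The axioms making an sc-scale into an sc-Banach space structure: the levels are nested,
each level norm is a genuine complete norm on its level, the inclusion of a level into
any lower level is a compact (bounded) operator, and the intersection `E∞` of all levels
is dense in every level. -/
def IsScBanach (S : ScScale E) : Prop :=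
  (∀ {m n : ℕ}, m ≤ n → S.level n ≤ S.level m) ∧
  (∀ m x, 0 ≤ S.lnorm m x) ∧
  (∀ m, ∀ x ∈ S.level m, ∀ y ∈ S.level m, S.lnorm m (x + y) ≤ S.lnorm m x + S.lnorm m y) ∧
  (∀ m (c : ℝ), ∀ x ∈ S.level m, S.lnorm m (c • x) = |c| * S.lnorm m x) ∧
  (∀ m, ∀ x ∈ S.level m, S.lnorm m x = 0 → x = 0) ∧
  (∀ m n, m ≤ n → ∃ C > (0:ℝ), ∀ x ∈ S.level n, S.lnorm m x ≤ C * S.lnorm n x) ∧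
  (∀ m (u : ℕ → E), (∀ k, u k ∈ S.level m) →
      (∀ ε > (0:ℝ), ∃ K, ∀ p ≥ K, ∀ q ≥ K, S.lnorm m (u p - u q) < ε) →
      ∃ x ∈ S.level m, ∀ ε > (0:ℝ), ∃ K, ∀ p ≥ K, S.lnorm m (u p - x) < ε) ∧
  (∀ m (u : ℕ → E), (∀ k, u k ∈ S.level (m+1)) → (∀ k, S.lnorm (m+1) (u k) ≤ 1) →
      ∃ φ : ℕ → ℕ, StrictMono φ ∧
        ∀ ε > (0:ℝ), ∃ K, ∀ p ≥ K, ∀ q ≥ K, S.lnorm m (u (φ p) - u (φ q)) < ε) ∧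
  (∀ m, ∀ x ∈ S.level m, ∀ ε > (0:ℝ), ∃ y, (∀ n, y ∈ S.level n) ∧ S.lnorm m (x - y) < ε)

/-- `U` is an open subset of the sc-space: it is contained in the `0`-level and open
with respect to the level-`0` norm topology. -/
def IsOpenIn (S : ScScale E) (U : Set E) : Prop :=
  U ⊆ (S.level 0 : Set E) ∧
  ∀ x ∈ U, ∃ ε > (0:ℝ), ∀ y ∈ (S.level 0 : Set E), S.lnorm 0 (y - x) < ε → y ∈ U

/-- The tangent scale `TE` with `(TE)ₘ = E_{m+1} ⊕ Eₘ`, realized on `E × E`. -/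
def tangent (S : ScScale E) : ScScale (E × E) where
  level m := (S.level (m+1)).prod (S.level m)
  lnorm m p := S.lnorm (m+1) p.1 + S.lnorm m p.2

/-- The tangent set `TU = U₁ ⊕ E` of a set `U`. -/
def tangentSet (S : ScScale E) (U : Set E) : Set (E × E) :=
  {p | p.1 ∈ U ∧ p.1 ∈ S.level 1 ∧ p.2 ∈ S.level 0}

/-- The shifted scale `E^k` with `(E^k)ₘ = E_{m+k}`. -/
def shift (S : ScScale E) (k : ℕ) : ScScale E where
  level m := S.level (m + k)
  lnorm m := S.lnorm (m + k)

/-- The direct sum of two sc-scales. -/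
def prod (S : ScScale E) (T : ScScale F) : ScScale (E × F) where
  level m := (S.level m).prod (T.level m)
  lnorm m p := S.lnorm m p.1 + T.lnorm m p.2

end ScScale

/-- `f : U → F` is of class sc⁰: it preserves all levels and is continuous on every level
with respect to the level norms. -/
def Sc0 {E : Type u} {F : Type v} [AddCommGroup E] [Module ℝ E] [AddCommGroup F] [Module ℝ F]
    (SE : ScScale E) (SF : ScScale F) (U : Set E) (f : E → F) : Prop :=
  ∀ m : ℕ,
    (∀ x ∈ U ∩ (SE.level m : Set E), f x ∈ SF.level m) ∧
    (∀ x ∈ U ∩ (SE.level m : Set E), ∀ ε > (0:ℝ), ∃ δ > (0:ℝ),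
      ∀ y ∈ U ∩ (SE.level m : Set E),
        SE.lnorm m (y - x) < δ → SF.lnorm m (f y - f x) < ε)

/-- The tangent map `Tf(x,h) = (f(x), Df(x)h)` associated to `f` and a family of
linearizations `Df`. -/
def Tmap {E : Type u} {F : Type v} [AddCommGroup E] [Module ℝ E] [AddCommGroup F] [Module ℝ F]
    (f : E → F) (Df : E → (E →ₗ[ℝ] F)) : E × E → F × F :=
  fun p => (f p.1, Df p.1 p.2)

/-- `Df` witnesses that `f` is of class sc¹ on `U`: at every point `x ∈ U₁` the linear
map `Df x` is bounded from level 0 to level 0 and is the sc-differential of `f` at `x`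
(a Fréchet-type limit taken from level 1 into level 0), and the tangent map
`Tf : TU → TF` is sc⁰. -/
def Sc1With {E : Type u} {F : Type v} [AddCommGroup E] [Module ℝ E] [AddCommGroup F] [Module ℝ F]
    (SE : ScScale E) (SF : ScScale F) (U : Set E) (f : E → F)
    (Df : E → (E →ₗ[ℝ] F)) : Prop :=
  (∀ x ∈ U ∩ (SE.level 1 : Set E),
    (∃ C : ℝ, ∀ h ∈ SE.level 0, SF.lnorm 0 (Df x h) ≤ C * SE.lnorm 0 h) ∧
    (∀ ε > (0:ℝ), ∃ δ > (0:ℝ), ∀ h ∈ (SE.level 1 : Set E),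
      x + h ∈ U → SE.lnorm 1 h < δ →
        SF.lnorm 0 (f (x + h) - f x - Df x h) ≤ ε * SE.lnorm 1 h)) ∧
  Sc0 SE.tangent SF.tangent (SE.tangentSet U) (Tmap f Df)

/-- `f` is of class sc¹ on `U`. -/
def IsSc1 {E : Type u} {F : Type v} [AddCommGroup E] [Module ℝ E] [AddCommGroup F] [Module ℝ F]
    (SE : ScScale E) (SF : ScScale F) (U : Set E) (f : E → F) : Prop :=
  Sc0 SE SF U f ∧ ∃ Df : E → (E →ₗ[ℝ] F), Sc1With SE SF U f Df

/-- `f` is of class sc^k on `U`, defined inductively via tangent maps. -/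
def IsSck (k : ℕ) {E : Type u} {F : Type v} [AddCommGroup E] [Module ℝ E]
    [AddCommGroup F] [Module ℝ F]
    (SE : ScScale E) (SF : ScScale F) (U : Set E) (f : E → F) : Prop :=
  match k with
  | 0 => Sc0 SE SF U f
  | k + 1 => Sc0 SE SF U f ∧ ∃ Df : E → (E →ₗ[ℝ] F), Sc1With SE SF U f Df ∧
      IsSck k SE.tangent SF.tangent (SE.tangentSet U) (Tmap f Df)

/-- The conditions of the second (level-wise `C¹`) characterization of sc¹,
witnessed by a family of linearizations `Df`.  For every `m ≥ 1` (written `m+1`):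
(1) the induced map `f : U_{m+1} → F_m` is of class `C¹` (Fréchet differentiable with
`Df x` bounded from level `m+1` to level `m`, and with derivative depending continuously
on the base point in the operator norm of `L(E_{m+1}, F_m)`), and
(2) `Df x` induces a bounded operator from level `m` to level `m`, and
`(x,h) ↦ Df x h` is continuous as a map `U_{m+1} ⊕ E_m → F_m`. -/
def ScLevelwiseC1Cond {E : Type u} {F : Type v}
    [AddCommGroup E] [Module ℝ E] [AddCommGroup F] [Module ℝ F]
    (SE : ScScale E) (SF : ScScale F) (U : Set E) (f : E → F)
    (Df : E → (E →ₗ[ℝ] F)) : Prop :=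
  ∀ m : ℕ,
    -- (1) f : U_{m+1} → F_m is C¹:
    (∀ x ∈ U ∩ (SE.level (m+1) : Set E),
      (∃ C : ℝ, ∀ h ∈ SE.level (m+1), SF.lnorm m (Df x h) ≤ C * SE.lnorm (m+1) h) ∧
      (∀ ε > (0:ℝ), ∃ δ > (0:ℝ), ∀ h ∈ (SE.level (m+1) : Set E),
        x + h ∈ U → SE.lnorm (m+1) h < δ →
          SF.lnorm m (f (x + h) - f x - Df x h) ≤ ε * SE.lnorm (m+1) h)) ∧
    -- (1) continuity of the derivative map U_{m+1} → L(E_{m+1}, F_m):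
    (∀ x ∈ U ∩ (SE.level (m+1) : Set E), ∀ ε > (0:ℝ), ∃ δ > (0:ℝ),
      ∀ y ∈ U ∩ (SE.level (m+1) : Set E), SE.lnorm (m+1) (y - x) < δ →
        ∀ h ∈ SE.level (m+1),
          SF.lnorm m (Df y h - Df x h) ≤ ε * SE.lnorm (m+1) h) ∧
    -- (2) Df x extends to a bounded operator E_m → F_m:
    (∀ x ∈ U ∩ (SE.level (m+1) : Set E),
      (∀ h ∈ SE.level m, Df x h ∈ SF.level m) ∧
      ∃ C : ℝ, ∀ h ∈ SE.level m, SF.lnorm m (Df x h) ≤ C * SE.lnorm m h) ∧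
    -- (2) joint continuity of U_{m+1} ⊕ E_m → F_m, (x,h) ↦ Df x h:
    (∀ x ∈ U ∩ (SE.level (m+1) : Set E), ∀ h ∈ (SE.level m : Set E), ∀ ε > (0:ℝ),
      ∃ δ > (0:ℝ), ∀ y ∈ U ∩ (SE.level (m+1) : Set E), ∀ k ∈ (SE.level m : Set E),
        SE.lnorm (m+1) (y - x) < δ → SE.lnorm m (k - h) < δ →
          SF.lnorm m (Df y k - Df x h) < ε)


section Infra

variable {E : Type u} {F : Type v} [AddCommGroup E] [Module ℝ E] [AddCommGroup F] [Module ℝ F]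

namespace ScScale

variable {S : ScScale E}

theorem IsScBanach.mono (hS : S.IsScBanach) {m n : ℕ} (h : m ≤ n) : S.level n ≤ S.level m :=
  hS.1 h

theorem IsScBanach.nonneg (hS : S.IsScBanach) (m : ℕ) (x : E) : 0 ≤ S.lnorm m x :=
  hS.2.1 m x

theorem IsScBanach.add_le (hS : S.IsScBanach) (m : ℕ) {x y : E}
    (hx : x ∈ S.level m) (hy : y ∈ S.level m) :
    S.lnorm m (x + y) ≤ S.lnorm m x + S.lnorm m y :=
  hS.2.2.1 m x hx y hy

theorem IsScBanach.smul_eq (hS : S.IsScBanach) (m : ℕ) (c : ℝ) {x : E}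
    (hx : x ∈ S.level m) : S.lnorm m (c • x) = |c| * S.lnorm m x :=
  hS.2.2.2.1 m c x hx

theorem IsScBanach.eq_zero (hS : S.IsScBanach) (m : ℕ) {x : E}
    (hx : x ∈ S.level m) (h : S.lnorm m x = 0) : x = 0 :=
  hS.2.2.2.2.1 m x hx h

theorem IsScBanach.embed (hS : S.IsScBanach) (m n : ℕ) (h : m ≤ n) :
    ∃ C > (0:ℝ), ∀ x ∈ S.level n, S.lnorm m x ≤ C * S.lnorm n x :=
  hS.2.2.2.2.2.1 m n h

theorem IsScBanach.complete (hS : S.IsScBanach) :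
    ∀ m (u : ℕ → E), (∀ k, u k ∈ S.level m) →
      (∀ ε > (0:ℝ), ∃ K, ∀ p ≥ K, ∀ q ≥ K, S.lnorm m (u p - u q) < ε) →
      ∃ x ∈ S.level m, ∀ ε > (0:ℝ), ∃ K, ∀ p ≥ K, S.lnorm m (u p - x) < ε :=
  hS.2.2.2.2.2.2.1

theorem IsScBanach.compact (hS : S.IsScBanach) :
    ∀ m (u : ℕ → E), (∀ k, u k ∈ S.level (m+1)) → (∀ k, S.lnorm (m+1) (u k) ≤ 1) →
      ∃ φ : ℕ → ℕ, StrictMono φ ∧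
        ∀ ε > (0:ℝ), ∃ K, ∀ p ≥ K, ∀ q ≥ K, S.lnorm m (u (φ p) - u (φ q)) < ε :=
  hS.2.2.2.2.2.2.2.1

theorem IsScBanach.lnorm_zero (hS : S.IsScBanach) (m : ℕ) : S.lnorm m (0:E) = 0 := by
  have := hS.smul_eq m 0 (Submodule.zero_mem (S.level m))
  simpa using this

theorem IsScBanach.lnorm_neg (hS : S.IsScBanach) (m : ℕ) {x : E} (hx : x ∈ S.level m) :
    S.lnorm m (-x) = S.lnorm m x := by
  have := hS.smul_eq m (-1) hx
  simpa using this

/-- The normed group structure on a level. -/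
@[reducible]
noncomputable def IsScBanach.grp (hS : S.IsScBanach) (m : ℕ) :
    NormedAddCommGroup ↥(S.level m) :=
  AddGroupNorm.toNormedAddCommGroup
    { toFun := fun x => S.lnorm m (x : E)
      map_zero' := hS.lnorm_zero m
      add_le' := fun x y => hS.add_le m x.2 y.2
      neg' := fun x => hS.lnorm_neg m x.2
      eq_zero_of_map_eq_zero' := fun x hx => Subtype.ext (hS.eq_zero m x.2 hx) }

theorem IsScBanach.norm_def (hS : S.IsScBanach) (m : ℕ) (x : ↥(S.level m)) :
    @norm _ (hS.grp m).toNorm x = S.lnorm m (x : E) := rfl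

/-- The normed space structure on a level. -/
@[reducible]
noncomputable def IsScBanach.sp (hS : S.IsScBanach) (m : ℕ) :
    @NormedSpace ℝ ↥(S.level m) _ (hS.grp m).toSeminormedAddCommGroup :=
  letI := hS.grp m
  { toModule := (S.level m).module
    norm_smul_le := fun c x => by
      rw [hS.norm_def, hS.norm_def]
      exact le_of_eq (by simpa using hS.smul_eq m c x.2) }

theorem IsScBanach.cpl (hS : S.IsScBanach) (m : ℕ) :
    @CompleteSpace ↥(S.level m) (hS.grp m).toUniformSpace := by
  letI := hS.grp m
  apply Metric.complete_of_cauchySeq_tendsto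
  intro u hu
  have hcauchy : ∀ ε > (0:ℝ), ∃ K, ∀ p ≥ K, ∀ q ≥ K,
      S.lnorm m (((u p : E)) - ((u q : E))) < ε := by
    intro ε hε
    obtain ⟨N, hN⟩ := Metric.cauchySeq_iff.1 hu ε hε
    exact ⟨N, fun p hp q hq => by
      have := hN p hp q hq; rw [dist_eq_norm, hS.norm_def] at this; exact this⟩
  obtain ⟨x, hxmem, hx⟩ := hS.complete m (fun k => ((u k : E))) (fun k => (u k).2) hcauchy
  refine ⟨⟨x, hxmem⟩, ?_⟩
  rw [Metric.tendsto_atTop]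
  intro ε hε
  obtain ⟨K, hK⟩ := hx ε hε
  exact ⟨K, fun n hn => by
    have := hK n hn; rw [dist_eq_norm, hS.norm_def]; exact this⟩

end ScScale

end Infra

section Fwd

variable {E : Type u} {F : Type v} [AddCommGroup E] [Module ℝ E] [AddCommGroup F] [Module ℝ F]
variable {SE : ScScale E} {SF : ScScale F} {U : Set E} {f : E → F} {Df : E → (E →ₗ[ℝ] F)}

/-- Membership of tangent points. -/
theorem tangent_mem_point (hSE : SE.IsScBanach) {m : ℕ} {x h : E}
    (hx : x ∈ U ∩ (SE.level (m+1) : Set E)) (hh : h ∈ (SE.level m : Set E)) :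
    ((x, h) : E × E) ∈ SE.tangentSet U ∩ ((SE.tangent.level m : Submodule ℝ (E × E)) : Set (E × E)) := by
  refine ⟨⟨hx.1, hSE.mono (by omega : 1 ≤ m+1) hx.2, hSE.mono (Nat.zero_le m) hh⟩, ?_⟩
  exact Submodule.mem_prod.2 ⟨hx.2, hh⟩

/-- L2: membership of the differential. -/
theorem fwd_mem (hSE : SE.IsScBanach)
    (hT : Sc0 SE.tangent SF.tangent (SE.tangentSet U) (Tmap f Df)) (m : ℕ)
    {x : E} (hx : x ∈ U ∩ (SE.level (m+1) : Set E)) {h : E} (hh : h ∈ SE.level m) :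
    Df x h ∈ SF.level m := by
  have := (hT m).1 (x, h) (tangent_mem_point hSE hx hh)
  exact (Submodule.mem_prod.1 this).2

/-- L1: joint continuity of (y,k) ↦ Df y k at level m. -/
theorem fwd_jointcont (hSE : SE.IsScBanach) (hSF : SF.IsScBanach)
    (hT : Sc0 SE.tangent SF.tangent (SE.tangentSet U) (Tmap f Df)) (m : ℕ)
    {x : E} (hx : x ∈ U ∩ (SE.level (m+1) : Set E)) {h : E} (hh : h ∈ SE.level m)
    {ε : ℝ} (hε : 0 < ε) :
    ∃ δ > (0:ℝ), ∀ y ∈ U ∩ (SE.level (m+1) : Set E), ∀ k ∈ (SE.level m : Set E),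
      SE.lnorm (m+1) (y - x) < δ → SE.lnorm m (k - h) < δ →
        SF.lnorm m (Df y k - Df x h) < ε := by
  obtain ⟨δ, hδ, hcont⟩ := (hT m).2 (x, h) (tangent_mem_point hSE hx hh) ε hε
  refine ⟨δ/2, by linarith, fun y hy k hk h1 h2 => ?_⟩
  have := hcont (y, k) (tangent_mem_point hSE hy hk) ?_
  · have hfst : 0 ≤ SF.lnorm (m+1) ((Tmap f Df (y,k)).1 - (Tmap f Df (x,h)).1) :=
      hSF.nonneg _ _
    have : SF.lnorm (m+1) (f y - f x) + SF.lnorm m (Df y k - Df x h) < ε := this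
    have h0 : 0 ≤ SF.lnorm (m+1) (f y - f x) := hSF.nonneg _ _
    linarith
  · show SE.lnorm (m+1) ((y,k).1 - (x,h).1) + SE.lnorm m ((y,k).2 - (x,h).2) < δ
    simp only
    linarith

/-- L3: boundedness of Df x : level m → level m. -/
theorem fwd_bound (hSE : SE.IsScBanach) (hSF : SF.IsScBanach)
    (hT : Sc0 SE.tangent SF.tangent (SE.tangentSet U) (Tmap f Df)) (m : ℕ)
    {x : E} (hx : x ∈ U ∩ (SE.level (m+1) : Set E)) :
    ∃ C > (0:ℝ), ∀ h ∈ SE.level m, SF.lnorm m (Df x h) ≤ C * SE.lnorm m h := by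
  obtain ⟨δ, hδ, hcont⟩ := fwd_jointcont hSE hSF hT m hx (Submodule.zero_mem (SE.level m))
    (ε := 1) one_pos
  refine ⟨2/δ, by positivity, fun h hh => ?_⟩
  by_cases hz : SE.lnorm m h = 0
  · have : h = 0 := hSE.eq_zero m hh hz
    subst this
    simp only [map_zero]
    rw [hSF.lnorm_zero, hz]
    simp
  · have hpos : 0 < SE.lnorm m h := lt_of_le_of_ne (hSE.nonneg m h) (Ne.symm hz)
    set c : ℝ := δ / (2 * SE.lnorm m h) with hc
    have hcpos : 0 < c := by positivity
    have hmem : c • h ∈ SE.level m := Submodule.smul_mem _ _ hh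
    have hsmall : SE.lnorm m (c • h - 0) < δ := by
      rw [sub_zero, hSE.smul_eq m c hh, abs_of_pos hcpos, hc,
        div_mul_eq_mul_div, mul_comm, div_lt_iff₀ (by positivity)]
      nlinarith
    have key := hcont x hx (c • h) hmem (by rw [sub_self, hSE.lnorm_zero]; exact hδ) hsmall
    rw [map_zero, sub_zero] at key
    have hsm : Df x (c • h) = c • Df x h := map_smul _ _ _
    rw [hsm, hSF.smul_eq m c (fwd_mem hSE hT m hx hh), abs_of_pos hcpos] at key
    have hlt : SF.lnorm m (Df x h) < 1 / c := by
      rw [lt_div_iff₀ hcpos]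
      linarith [key]
    have hcalc : 1 / c = 2 / δ * SE.lnorm m h := by
      field_simp [hc]
      rw [hc]; field_simp
    rw [hcalc] at hlt
    exact hlt.le
theorem ScScale.IsScBanach.tri {S : ScScale E} (hS : S.IsScBanach) (m : ℕ) {p q r : E}
    (hp : p ∈ S.level m) (hq : q ∈ S.level m) (hr : r ∈ S.level m) :
    S.lnorm m (p - r) ≤ S.lnorm m (p - q) + S.lnorm m (q - r) := by
  have h1 : p - r = (p - q) + (q - r) := by abel
  rw [h1]
  exact hS.add_le m (Submodule.sub_mem _ hp hq) (Submodule.sub_mem _ hq hr)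

/-- L4: continuity of the derivative in operator norm (uses compactness of inclusions). -/
theorem fwd_opcont (hSE : SE.IsScBanach) (hSF : SF.IsScBanach)
    (hT : Sc0 SE.tangent SF.tangent (SE.tangentSet U) (Tmap f Df)) (m : ℕ)
    {x : E} (hx : x ∈ U ∩ (SE.level (m+1) : Set E)) :
    ∀ ε > (0:ℝ), ∃ δ > (0:ℝ), ∀ y ∈ U ∩ (SE.level (m+1) : Set E),
      SE.lnorm (m+1) (y - x) < δ → ∀ h ∈ SE.level (m+1),
        SF.lnorm m (Df y h - Df x h) ≤ ε * SE.lnorm (m+1) h := by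
  by_contra hcon
  push_neg at hcon
  obtain ⟨ε, hε, hcon⟩ := hcon
  have hsel : ∀ n : ℕ, ∃ y, (y ∈ U ∩ (SE.level (m+1) : Set E)) ∧
      SE.lnorm (m+1) (y - x) < 1/(n+1) ∧ ∃ h, h ∈ SE.level (m+1) ∧
        ε * SE.lnorm (m+1) h < SF.lnorm m (Df y h - Df x h) := by
    intro n
    obtain ⟨y, hy, hlt, h, hh, hgt⟩ := hcon (1/(n+1)) (by positivity)
    exact ⟨y, hy, hlt, h, hh, hgt⟩
  choose y hy hylt h hh hgt using hsel
  have hpos : ∀ n, 0 < SE.lnorm (m+1) (h n) := by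
    intro n
    rcases lt_or_eq_of_le (hSE.nonneg (m+1) (h n)) with hp | hp
    · exact hp
    · exfalso
      have h0 : h n = 0 := hSE.eq_zero (m+1) (hh n) hp.symm
      have hgtn := hgt n
      rw [h0] at hgtn
      simp only [map_zero, sub_self] at hgtn
      rw [hSE.lnorm_zero, hSF.lnorm_zero, mul_zero] at hgtn
      exact absurd hgtn (lt_irrefl 0)
  set k : ℕ → E := fun n => (SE.lnorm (m+1) (h n))⁻¹ • h n with hkdef
  have hkmem : ∀ n, k n ∈ SE.level (m+1) := fun n => Submodule.smul_mem _ _ (hh n)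
  have hk1 : ∀ n, SE.lnorm (m+1) (k n) = 1 := by
    intro n
    rw [hkdef]
    simp only
    rw [hSE.smul_eq (m+1) _ (hh n), abs_of_pos (by exact inv_pos.2 (hpos n)),
      inv_mul_cancel₀ (hpos n).ne']
  have hdmem : ∀ n, Df (y n) (h n) - Df x (h n) ∈ SF.level m := fun n =>
    Submodule.sub_mem _ (fwd_mem hSE hT m (hy n) (hSE.mono (Nat.le_succ m) (hh n)))
      (fwd_mem hSE hT m hx (hSE.mono (Nat.le_succ m) (hh n)))
  have hεk : ∀ n, ε < SF.lnorm m (Df (y n) (k n) - Df x (k n)) := by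
    intro n
    have hsm : Df (y n) (k n) - Df x (k n)
        = (SE.lnorm (m+1) (h n))⁻¹ • (Df (y n) (h n) - Df x (h n)) := by
      rw [hkdef]
      simp only [map_smul, smul_sub]
    rw [hsm, hSF.smul_eq m _ (hdmem n), abs_of_pos (by exact inv_pos.2 (hpos n)),
      inv_mul_eq_div, lt_div_iff₀ (hpos n)]
    linarith [hgt n]
  obtain ⟨φ, hφ, hcauchy⟩ := hSE.compact m k hkmem (fun n => (hk1 n).le)
  obtain ⟨z, hz, hconv⟩ := hSE.complete m (fun n => k (φ n))
    (fun n => hSE.mono (Nat.le_succ m) (hkmem (φ n))) hcauchy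
  obtain ⟨δ', hδ', hc2⟩ := fwd_jointcont hSE hSF hT m hx hz (half_pos hε)
  obtain ⟨N1, hN1⟩ := exists_nat_one_div_lt hδ'
  obtain ⟨N2, hN2⟩ := hconv δ' hδ'
  set n := max N1 N2 with hn
  have hyn : SE.lnorm (m+1) (y (φ n) - x) < δ' := by
    have h1 : (1:ℝ)/(φ n + 1) ≤ 1/(N1+1) := by
      apply one_div_le_one_div_of_le (by positivity)
      have hle : N1 ≤ φ n := le_trans (le_max_left _ _) (hφ.le_apply)
      have : (N1:ℝ) ≤ (φ n : ℝ) := Nat.cast_le.2 hle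
      push_cast
      linarith
    calc SE.lnorm (m+1) (y (φ n) - x) < 1/(φ n + 1) := hylt (φ n)
    _ ≤ 1/(N1+1) := h1
    _ < δ' := hN1
  have hkz : SE.lnorm m (k (φ n) - z) < δ' := hN2 n (le_max_right _ _)
  have hA := hc2 (y (φ n)) (hy (φ n)) (k (φ n))
    (hSE.mono (Nat.le_succ m) (hkmem (φ n))) hyn hkz
  have hB := hc2 x hx (k (φ n)) (hSE.mono (Nat.le_succ m) (hkmem (φ n)))
    (by rw [sub_self, hSE.lnorm_zero]; exact hδ') hkz
  have ha : Df (y (φ n)) (k (φ n)) ∈ SF.level m :=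
    fwd_mem hSE hT m (hy (φ n)) (hSE.mono (Nat.le_succ m) (hkmem (φ n)))
  have hb : Df x z ∈ SF.level m := fwd_mem hSE hT m hx hz
  have hc : Df x (k (φ n)) ∈ SF.level m :=
    fwd_mem hSE hT m hx (hSE.mono (Nat.le_succ m) (hkmem (φ n)))
  have htri := hSF.tri m ha hb hc
  have hflip : SF.lnorm m (Df x z - Df x (k (φ n)))
      = SF.lnorm m (Df x (k (φ n)) - Df x z) := by
    rw [← hSF.lnorm_neg m (Submodule.sub_mem _ hb hc), neg_sub]
  have := hεk (φ n)
  rw [hflip] at htri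
  linarith

end Fwd

section FTC

variable {E : Type u} {F : Type v} [AddCommGroup E] [Module ℝ E] [AddCommGroup F] [Module ℝ F]

open Classical in
/-- Selection into a level, with junk value `0`. -/
noncomputable def scSelect (S : ScScale F) (m : ℕ) (w : F) : ↥(S.level m) :=
  if hw : w ∈ S.level m then ⟨w, hw⟩ else 0

theorem scSelect_coe {S : ScScale F} {m : ℕ} {w : F} (hw : w ∈ S.level m) :
    ((scSelect S m w : ↥(S.level m)) : F) = w := by
  rw [scSelect, dif_pos hw]


variable {SE : ScScale E} {SF : ScScale F} {U : Set E} {f : E → F} {Df : E → (E →ₗ[ℝ] F)}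

set_option maxHeartbeats 2000000 in
/-- L5: higher-level differentiability via integration. -/
theorem fwd_diff (hSE : SE.IsScBanach) (hSF : SF.IsScBanach) (hU : SE.IsOpenIn U)
    (hf : Sc0 SE SF U f)
    (hD1 : ∀ x ∈ U ∩ (SE.level 1 : Set E), ∀ ε > (0:ℝ), ∃ δ > (0:ℝ),
      ∀ h ∈ (SE.level 1 : Set E), x + h ∈ U → SE.lnorm 1 h < δ →
        SF.lnorm 0 (f (x + h) - f x - Df x h) ≤ ε * SE.lnorm 1 h)
    (hT : Sc0 SE.tangent SF.tangent (SE.tangentSet U) (Tmap f Df)) (m : ℕ)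
    {x : E} (hx : x ∈ U ∩ (SE.level (m+1) : Set E)) {ε : ℝ} (hε : 0 < ε) :
    ∃ δ > (0:ℝ), ∀ h ∈ (SE.level (m+1) : Set E), x + h ∈ U → SE.lnorm (m+1) h < δ →
      SF.lnorm m (f (x + h) - f x - Df x h) ≤ ε * SE.lnorm (m+1) h := by
  classical
  obtain ⟨εU, hεU, hball⟩ := hU.2 x hx.1
  obtain ⟨C₀, hC₀, hC₀le⟩ := hSE.embed 0 (m+1) (Nat.zero_le _)
  obtain ⟨δ₁, hδ₁, hop⟩ := fwd_opcont hSE hSF hT m hx ε hε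
  refine ⟨min δ₁ (εU/(2*C₀+1)), lt_min hδ₁ (by positivity), fun h hh hxh hhδ => ?_⟩
  have hhδ₁ : SE.lnorm (m+1) h < δ₁ := lt_of_lt_of_le hhδ (min_le_left _ _)
  have hhεU : SE.lnorm (m+1) h < εU/(2*C₀+1) := lt_of_lt_of_le hhδ (min_le_right _ _)
  have hLnn : 0 ≤ SE.lnorm (m+1) h := hSE.nonneg _ _
  -- the segment stays in U
  have hsegmem : ∀ t : ℝ, x + t • h ∈ SE.level (m+1) := fun t =>
    Submodule.add_mem _ hx.2 (Submodule.smul_mem _ _ hh)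
  have hseg : ∀ t : ℝ, |t| ≤ 2 → x + t • h ∈ U := by
    intro t ht
    apply hball _ (hSE.mono (Nat.zero_le _) (hsegmem t))
    rw [add_sub_cancel_left, hSE.smul_eq 0 t (hSE.mono (Nat.zero_le _) hh)]
    have h1 : SE.lnorm 0 h ≤ C₀ * SE.lnorm (m+1) h := hC₀le h hh
    have h2 : SE.lnorm (m+1) h * (2*C₀+1) < εU := (lt_div_iff₀ (by positivity)).1 hhεU
    nlinarith [hSE.nonneg 0 h, abs_nonneg t]
  have hsegU : ∀ t : ℝ, |t| ≤ 2 → x + t • h ∈ U ∩ (SE.level (m+1) : Set E) :=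
    fun t ht => ⟨hseg t ht, hsegmem t⟩
  have hsegU1 : ∀ t : ℝ, |t| ≤ 2 → x + t • h ∈ U ∩ (SE.level 1 : Set E) :=
    fun t ht => ⟨hseg t ht, hSE.mono (by omega) (hsegmem t)⟩
  have hhm : h ∈ SE.level m := hSE.mono (Nat.le_succ m) hh
  have hh1 : h ∈ SE.level 1 := hSE.mono (by omega) hh
  -- instances
  letI : NormedAddCommGroup ↥(SF.level 0) := hSF.grp 0
  letI : NormedSpace ℝ ↥(SF.level 0) := hSF.sp 0
  haveI : CompleteSpace ↥(SF.level 0) := hSF.cpl 0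
  letI : NormedAddCommGroup ↥(SF.level m) := hSF.grp m
  letI : NormedSpace ℝ ↥(SF.level m) := hSF.sp m
  haveI : CompleteSpace ↥(SF.level m) := hSF.cpl m
  -- the inclusion as a continuous linear map
  obtain ⟨CF, hCF, hCFle⟩ := hSF.embed 0 m (Nat.zero_le m)
  set ιlin : ↥(SF.level m) →ₗ[ℝ] ↥(SF.level 0) :=
    Submodule.inclusion (hSF.mono (Nat.zero_le m)) with hιlin
  have hιbd : ∀ v : ↥(SF.level m), ‖ιlin v‖ ≤ CF * ‖v‖ := by
    intro v
    show SF.lnorm 0 ((ιlin v : ↥(SF.level 0)) : F) ≤ CF * SF.lnorm m (v : F)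
    have hcoe : ((ιlin v : ↥(SF.level 0)) : F) = (v : F) := rfl
    rw [hcoe]
    exact hCFle _ v.2
  set ι : ↥(SF.level m) →L[ℝ] ↥(SF.level 0) := ιlin.mkContinuous CF hιbd with hι
  have hιcoe : ∀ v : ↥(SF.level m), ((ι v : ↥(SF.level 0)) : F) = (v : F) := fun v => rfl
  -- the functions
  set vm : ℝ → ↥(SF.level m) := fun t => scSelect SF m (Df (x + t • h) h) with hvmdef
  set g : ℝ → ↥(SF.level 0) := fun t => scSelect SF 0 (f (x + t • h)) with hgdef
  have hvm : ∀ t : ℝ, |t| ≤ 2 → ((vm t : ↥(SF.level m)) : F) = Df (x + t • h) h := by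
    intro t ht
    exact scSelect_coe (fwd_mem hSE hT m (hsegU t ht) hhm)
  have hg : ∀ t : ℝ, |t| ≤ 2 → ((g t : ↥(SF.level 0)) : F) = f (x + t • h) := by
    intro t ht
    exact scSelect_coe ((hf 0).1 _ ⟨hseg t ht, hSE.mono (Nat.zero_le _) (hsegmem t)⟩)
  -- continuity of vm on [0,1]
  have hcontvm : ContinuousOn vm (Set.Icc (0:ℝ) 1) := by
    rw [Metric.continuousOn_iff]
    intro t ht ε' hε'
    have habs_t : |t| ≤ 2 := by
      rw [abs_of_nonneg ht.1]; linarith [ht.2]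
    obtain ⟨δ'', hδ'', hc⟩ := fwd_jointcont hSE hSF hT m (hsegU t habs_t) hhm hε'
    refine ⟨δ''/(SE.lnorm (m+1) h + 1), by positivity, fun s hs hdist => ?_⟩
    have habs_s : |s| ≤ 2 := by
      rw [abs_of_nonneg hs.1]; linarith [hs.2]
    rw [dist_eq_norm]
    show SF.lnorm m (((vm s - vm t : ↥(SF.level m)) : F)) < ε'
    have hcoe : ((vm s - vm t : ↥(SF.level m)) : F) = Df (x + s • h) h - Df (x + t • h) h := by
      push_cast [hvm s habs_s, hvm t habs_t]
      rfl
    rw [hcoe]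
    apply hc (x + s • h) (hsegU s habs_s) h hhm ?_ ?_
    · have hrw : (x + s • h) - (x + t • h) = (s - t) • h := by
        rw [sub_smul]; abel
      rw [hrw, hSE.smul_eq (m+1) _ hh]
      have hst : |s - t| < δ''/(SE.lnorm (m+1) h + 1) := by
        rw [← Real.dist_eq]; exact hdist
      have hst2 : |s - t| * (SE.lnorm (m+1) h + 1) < δ'' := by
        rw [← lt_div_iff₀ (by positivity)]; exact hst
      nlinarith [abs_nonneg (s - t)]
    · rw [sub_self, hSE.lnorm_zero]; exact hδ''
  have hint_m : IntervalIntegrable vm MeasureTheory.volume 0 1 := by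
    apply ContinuousOn.intervalIntegrable
    rwa [Set.uIcc_of_le (by norm_num : (0:ℝ) ≤ 1)]
  have hint_0 : IntervalIntegrable (fun t => ι (vm t)) MeasureTheory.volume 0 1 := by
    apply ContinuousOn.intervalIntegrable
    rw [Set.uIcc_of_le (by norm_num : (0:ℝ) ≤ 1)]
    exact ι.continuous.comp_continuousOn hcontvm
  -- derivative of g
  have hderiv : ∀ t ∈ Set.uIcc (0:ℝ) 1, HasDerivAt g (ι (vm t)) t := by
    intro t ht
    rw [Set.uIcc_of_le (by norm_num : (0:ℝ) ≤ 1)] at ht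
    have habs_t : |t| ≤ 1 := by rw [abs_of_nonneg ht.1]; exact ht.2
    rw [hasDerivAt_iff_tendsto, Metric.tendsto_nhds]
    intro ε' hε'
    set L1 : ℝ := SE.lnorm 1 h with hL1
    have hL1nn : 0 ≤ L1 := hSE.nonneg _ _
    obtain ⟨δd, hδd, hd⟩ := hD1 (x + t • h) (hsegU1 t (by linarith)) (ε'/(2*(L1+1)))
      (by positivity)
    have hev : ∀ᶠ s in nhds t, |s - t| < min 1 (δd/(L1+1)) :=
      eventually_abs_sub_lt t (lt_min one_pos (by positivity))
    filter_upwards [hev] with s hs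
    rw [Real.dist_eq, sub_zero]
    by_cases hst : s = t
    · subst hst
      simp only [sub_self, zero_smul, sub_zero, norm_zero, inv_zero, zero_mul, mul_zero,
        abs_zero]
      exact hε'
    · have hstpos : 0 < |s - t| := abs_pos.2 (sub_ne_zero.2 hst)
      have habs_s : |s| ≤ 2 := by
        calc |s| = |t + (s - t)| := by ring_nf
        _ ≤ |t| + |s - t| := abs_add_le _ _
        _ ≤ 1 + 1 := add_le_add habs_t (le_of_lt (lt_of_lt_of_le hs (min_le_left _ _)))
        _ = 2 := by norm_num
      have hksm : (s - t) • h ∈ SE.level 1 := Submodule.smul_mem _ _ hh1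
      have hUmem : (x + t • h) + (s - t) • h ∈ U := by
        have hrw : (x + t • h) + (s - t) • h = x + s • h := by rw [sub_smul]; abel
        rw [hrw]
        exact hseg s habs_s
      have hlt : SE.lnorm 1 ((s - t) • h) < δd := by
        rw [hSE.smul_eq 1 _ hh1]
        have hs2 : |s - t| < δd/(L1+1) := lt_of_lt_of_le hs (min_le_right _ _)
        have hst2 : |s - t| * (L1 + 1) < δd := by
          rw [← lt_div_iff₀ (by positivity)]; exact hs2
        nlinarith [abs_nonneg (s - t)]
      have hest := hd ((s - t) • h) hksm hUmem hlt
      have hrw2 : (x + t • h) + (s - t) • h = x + s • h := by rw [sub_smul]; abel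
      rw [hrw2, hSE.smul_eq 1 _ hh1] at hest
      -- the norm expression
      have hnorm_eq : ‖g s - g t - (s - t) • ι (vm t)‖
          = SF.lnorm 0 (f (x + s • h) - f (x + t • h) - Df (x + t • h) ((s - t) • h)) := by
        show SF.lnorm 0 (((g s - g t - (s - t) • ι (vm t) : ↥(SF.level 0)) : F)) = _
        have hcoe2 : ((g s - g t - (s - t) • ι (vm t) : ↥(SF.level 0)) : F)
            = (g s : F) - (g t : F) - (s - t) • ((ι (vm t) : ↥(SF.level 0)) : F) := by
          push_cast
          rfl
        rw [hcoe2, hιcoe, hvm t (by linarith), hg s habs_s, hg t (by linarith), map_smul]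
      have hns : ‖s - t‖ = |s - t| := Real.norm_eq_abs _
      rw [abs_of_nonneg (by positivity), hns, hnorm_eq]
      calc |s - t|⁻¹ * SF.lnorm 0 (f (x + s • h) - f (x + t • h) - Df (x + t • h) ((s - t) • h))
          ≤ |s - t|⁻¹ * (ε'/(2*(L1+1)) * (|s - t| * L1)) := by
            apply mul_le_mul_of_nonneg_left hest (by positivity)
        _ = ε'/(2*(L1+1)) * L1 := by
            field_simp
        _ < ε' := by
            rw [div_mul_eq_mul_div, div_lt_iff₀ (by positivity)]
            nlinarith
  -- FTC
  have hFTC := intervalIntegral.integral_eq_sub_of_hasDerivAt hderiv hint_0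
  have hcomm := ι.intervalIntegral_comp_comm hint_m (a := 0) (b := 1)
  set I : ↥(SF.level m) := ∫ t in (0:ℝ)..1, vm t with hI
  have hιI : ι I = g 1 - g 0 := by rw [← hcomm]; exact hFTC
  have hIcoe : (I : F) = f (x + h) - f x := by
    have hc := congrArg (Subtype.val) hιI
    rw [hιcoe] at hc
    rw [hc]
    push_cast
    rw [hg 1 (by norm_num), hg 0 (by norm_num)]
    norm_num
  set dfx : ↥(SF.level m) := ⟨Df x h, fwd_mem hSE hT m hx hhm⟩ with hdfx
  have hsub : I - dfx = ∫ t in (0:ℝ)..1, (vm t - dfx) := by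
    rw [intervalIntegral.integral_sub hint_m intervalIntegrable_const,
      intervalIntegral.integral_const]
    norm_num
    exact hI
  have hbnd : ‖I - dfx‖ ≤ (ε * SE.lnorm (m+1) h) * |1 - (0:ℝ)| := by
    rw [hsub]
    apply intervalIntegral.norm_integral_le_of_norm_le_const
    intro t ht
    rw [Set.uIoc_of_le (by norm_num : (0:ℝ) ≤ 1)] at ht
    have habs : |t| ≤ 2 := by rw [abs_of_pos ht.1]; linarith [ht.2]
    show SF.lnorm m ((vm t - dfx : ↥(SF.level m)) : F) ≤ ε * SE.lnorm (m+1) h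
    have hcoe : ((vm t - dfx : ↥(SF.level m)) : F) = Df (x + t • h) h - Df x h := by
      push_cast [hvm t habs]
      rfl
    rw [hcoe]
    apply hop (x + t • h) (hsegU t habs) ?_ h hh
    rw [add_sub_cancel_left, hSE.smul_eq (m+1) _ hh]
    have habs1 : |t| ≤ 1 := by rw [abs_of_pos ht.1]; exact ht.2
    nlinarith
  have hfinal : SF.lnorm m (f (x + h) - f x - Df x h) = ‖I - dfx‖ := by
    show _ = SF.lnorm m ((I - dfx : ↥(SF.level m)) : F)
    have hcoe : ((I - dfx : ↥(SF.level m)) : F) = (I : F) - Df x h := by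
      push_cast
      rfl
    rw [hcoe, hIcoe]
  rw [hfinal]
  calc ‖I - dfx‖ ≤ (ε * SE.lnorm (m+1) h) * |1 - (0:ℝ)| := hbnd
    _ = ε * SE.lnorm (m+1) h := by norm_num

end FTC

/-- the two definitions of sc¹ coincide.  An sc⁰-map `f : U → F`
is sc¹ (existence of pointwise sc-differentials together with an sc⁰ tangent map)
if and only if there is a family of linearizations satisfying the level-wise
`C¹` conditions (1) and (2). -/
theorem isSc1_iff_levelwiseC1 {E : Type u} {F : Type v}
    [AddCommGroup E] [Module ℝ E] [AddCommGroup F] [Module ℝ F]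
    (SE : ScScale E) (SF : ScScale F)
    (hSE : SE.IsScBanach) (hSF : SF.IsScBanach)
    (U : Set E) (hU : SE.IsOpenIn U)
    (f : E → F) (hf : Sc0 SE SF U f) :
    IsSc1 SE SF U f ↔
      ∃ Df : E → (E →ₗ[ℝ] F), ScLevelwiseC1Cond SE SF U f Df := by
  constructor
  · rintro ⟨hf0, Df, hDf⟩
    obtain ⟨h1, hT⟩ := hDf
    have hD1 : ∀ x ∈ U ∩ (SE.level 1 : Set E), ∀ ε > (0:ℝ), ∃ δ > (0:ℝ),
        ∀ h ∈ (SE.level 1 : Set E), x + h ∈ U → SE.lnorm 1 h < δ →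
          SF.lnorm 0 (f (x + h) - f x - Df x h) ≤ ε * SE.lnorm 1 h :=
      fun x hx => (h1 x hx).2
    refine ⟨Df, fun m => ⟨?_, ?_, ?_, ?_⟩⟩
    · -- (1a): boundedness (m+1 → m) and differentiability
      intro x hx
      constructor
      · obtain ⟨C, hCpos, hC⟩ := fwd_bound hSE hSF hT m hx
        obtain ⟨C2, hC2pos, hC2⟩ := hSE.embed m (m+1) (Nat.le_succ m)
        refine ⟨C * C2, fun h hh => ?_⟩
        calc SF.lnorm m (Df x h) ≤ C * SE.lnorm m h :=
              hC h (hSE.mono (Nat.le_succ m) hh)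
          _ ≤ C * (C2 * SE.lnorm (m+1) h) :=
              mul_le_mul_of_nonneg_left (hC2 h hh) hCpos.le
          _ = C * C2 * SE.lnorm (m+1) h := by ring
      · intro ε hε
        exact fwd_diff hSE hSF hU hf hD1 hT m hx hε
    · -- (1b): continuity of the derivative in operator norm
      exact fun x hx => fwd_opcont hSE hSF hT m hx
    · -- (2a): extension to level m
      intro x hx
      refine ⟨fun h hh => fwd_mem hSE hT m hx hh, ?_⟩
      obtain ⟨C, _, hC⟩ := fwd_bound hSE hSF hT m hx
      exact ⟨C, hC⟩
    · -- (2b): joint continuity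
      exact fun x hx h hh ε hε => fwd_jointcont hSE hSF hT m hx hh hε
  · rintro ⟨Df, hC⟩
    refine ⟨hf, Df, fun x hx => ⟨?_, ?_⟩, ?_⟩
    · obtain ⟨C, hC'⟩ := ((hC 0).2.2.1 x hx).2
      exact ⟨C, hC'⟩
    · exact fun ε hε => ((hC 0).1 x hx).2 ε hε
    · intro m
      constructor
      · rintro ⟨p1, p2⟩ ⟨⟨hp1U, hp11, hp20⟩, hpm⟩
        have hpm' := Submodule.mem_prod.1 hpm
        refine Submodule.mem_prod.2 ⟨?_, ?_⟩
        · exact (hf (m+1)).1 p1 ⟨hp1U, hpm'.1⟩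
        · exact ((hC m).2.2.1 p1 ⟨hp1U, hpm'.1⟩).1 p2 hpm'.2
      · rintro ⟨p1, p2⟩ ⟨⟨hp1U, hp11, hp20⟩, hpm⟩ ε hε
        have hpm' := Submodule.mem_prod.1 hpm
        obtain ⟨δ1, hδ1, hcf⟩ := (hf (m+1)).2 p1 ⟨hp1U, hpm'.1⟩ (ε/2) (by linarith)
        obtain ⟨δ2, hδ2, hcd⟩ := (hC m).2.2.2 p1 ⟨hp1U, hpm'.1⟩ p2 hpm'.2 (ε/2) (by linarith)
        refine ⟨min δ1 δ2, lt_min hδ1 hδ2, ?_⟩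
        rintro ⟨q1, q2⟩ ⟨⟨hq1U, hq11, hq20⟩, hqm⟩ hlt
        have hqm' := Submodule.mem_prod.1 hqm
        have hlt' : SE.lnorm (m+1) (q1 - p1) + SE.lnorm m (q2 - p2) < min δ1 δ2 := hlt
        have hn1 : 0 ≤ SE.lnorm (m+1) (q1 - p1) := hSE.nonneg _ _
        have hn2 : 0 ≤ SE.lnorm m (q2 - p2) := hSE.nonneg _ _
        have hm1 : min δ1 δ2 ≤ δ1 := min_le_left _ _
        have hm2 : min δ1 δ2 ≤ δ2 := min_le_right _ _
        have h11 : SE.lnorm (m+1) (q1 - p1) < δ1 := by linarith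
        have h12 : SE.lnorm (m+1) (q1 - p1) < δ2 := by linarith
        have h22 : SE.lnorm m (q2 - p2) < δ2 := by linarith
        have hA := hcf q1 ⟨hq1U, hqm'.1⟩ h11
        have hB := hcd q1 ⟨hq1U, hqm'.1⟩ q2 hqm'.2 h12 h22
        show SF.lnorm (m+1) (f q1 - f p1) + SF.lnorm m (Df q1 q2 - Df p1 p2) < ε
        linarith
end

section
/- Chain Rule for sc¹-maps: let E, F, G be sc-Banach spaces, U ⊆ E and V ⊆ F open. If f : U → V is sc¹ and g : V → G is sc¹, then g ∘ f : U → G is sc¹ and T(g ∘ f) = (Tg) ∘ (Tf) as maps TU → TG. -/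
universe u v

section Helpers

variable {E : Type u} {F : Type v} [AddCommGroup E] [Module ℝ E] [AddCommGroup F] [Module ℝ F]

lemma ScScale.IsScBanach.nonneg_s2 {S : ScScale E} (hS : S.IsScBanach) (m : ℕ) (x : E) :
    0 ≤ S.lnorm m x := hS.2.1 m x

lemma ScScale.IsScBanach.norm_zero {S : ScScale E} (hS : S.IsScBanach) (m : ℕ) :
    S.lnorm m 0 = 0 := by
  have h := hS.2.2.2.1 m 0 0 (zero_mem _)
  simpa using h

lemma ScScale.IsScBanach.norm_neg {S : ScScale E} (hS : S.IsScBanach) (m : ℕ)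
    {x : E} (hx : x ∈ S.level m) : S.lnorm m (-x) = S.lnorm m x := by
  have h := hS.2.2.2.1 m (-1) x hx
  simpa using h

lemma ScScale.IsScBanach.tri_s2 {S : ScScale E} (hS : S.IsScBanach) (m : ℕ)
    {a b : E} (ha : a ∈ S.level m) (hb : b ∈ S.level m) :
    S.lnorm m (a + b) ≤ S.lnorm m a + S.lnorm m b := hS.2.2.1 m a ha b hb

lemma ScScale.IsScBanach.tri_sub {S : ScScale E} (hS : S.IsScBanach) (m : ℕ)
    {a b : E} (ha : a ∈ S.level m) (hb : b ∈ S.level m) :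
    S.lnorm m (a - b) ≤ S.lnorm m a + S.lnorm m b := by
  have h := hS.tri_s2 m ha (neg_mem hb)
  rw [hS.norm_neg m hb] at h
  simpa [sub_eq_add_neg] using h

lemma ScScale.IsScBanach.norm_smul {S : ScScale E} (hS : S.IsScBanach) (m : ℕ)
    (c : ℝ) {x : E} (hx : x ∈ S.level m) : S.lnorm m (c • x) = |c| * S.lnorm m x :=
  hS.2.2.2.1 m c x hx

/-- Composition of sc⁰-maps. -/
lemma Sc0.comp {G : Type w} [AddCommGroup G] [Module ℝ G]
    {SE : ScScale E} {SF : ScScale F} {SG : ScScale G} {U : Set E} {V : Set F}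
    {f : E → F} {g : F → G}
    (hf : Sc0 SE SF U f) (hg : Sc0 SF SG V g) (hfV : ∀ x ∈ U, f x ∈ V) :
    Sc0 SE SG U (g ∘ f) := by
  intro m
  refine ⟨fun x hx => (hg m).1 (f x) ⟨hfV x hx.1, (hf m).1 x hx⟩, ?_⟩
  intro x hx ε hε
  obtain ⟨δ₁, hδ₁pos, hδ₁⟩ := (hg m).2 (f x) ⟨hfV x hx.1, (hf m).1 x hx⟩ ε hε
  obtain ⟨δ, hδpos, hδ⟩ := (hf m).2 x hx δ₁ hδ₁pos
  refine ⟨δ, hδpos, fun y hy hyx => ?_⟩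
  exact hδ₁ (f y) ⟨hfV y hy.1, (hf m).1 y hy⟩ (hδ y hy hyx)

end Helpers


/-- Abstract mean value inequality for a seminorm on a submodule. -/
lemma sc_mvt {G : Type w} [AddCommGroup G] [Module ℝ G] (P : Submodule ℝ G) (N : G → ℝ)
    (hN0 : ∀ z, 0 ≤ N z)
    (htri : ∀ a ∈ P, ∀ b ∈ P, N (a + b) ≤ N a + N b)
    (hhom : ∀ (c : ℝ), ∀ a ∈ P, N (c • a) = |c| * N a)
    (φ v : ℝ → G)
    (hφ : ∀ t ∈ Set.Icc (0:ℝ) 1, φ t ∈ P) (hv : ∀ t ∈ Set.Icc (0:ℝ) 1, v t ∈ P)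
    (hder : ∀ t ∈ Set.Icc (0:ℝ) 1, ∀ ε > (0:ℝ), ∃ δ > (0:ℝ), ∀ s : ℝ, s ≠ 0 → |s| < δ →
        t + s ∈ Set.Icc (0:ℝ) 1 → N (φ (t + s) - φ t - s • v t) ≤ ε * |s|)
    {M : ℝ} (hM : ∀ t ∈ Set.Icc (0:ℝ) 1, N (v t - v 0) ≤ M) :
    N (φ 1 - φ 0 - v 0) ≤ M := by
  have hNzero : N 0 = 0 := by
    have h := hhom 0 0 (zero_mem _); simpa using h
  have hNneg : ∀ a ∈ P, N (-a) = N a := by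
    intro a ha; have h := hhom (-1) a ha; simpa using h
  have h01 : (0:ℝ) ∈ Set.Icc (0:ℝ) 1 := by constructor <;> norm_num
  have h11 : (1:ℝ) ∈ Set.Icc (0:ℝ) 1 := by constructor <;> norm_num
  have hM0 : 0 ≤ M := le_trans (hN0 _) (hM 0 h01)
  -- define u
  set u : ℝ → ℝ := fun t => N (φ t - φ 0 - t • v 0) with hu
  have key : ∀ ε > (0:ℝ), u 1 ≤ (M + ε) * 1 := by
    intro ε hε
    set A : Set ℝ := {t | t ∈ Set.Icc (0:ℝ) 1 ∧ u t ≤ (M + ε) * t} with hA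
    have h0A : (0:ℝ) ∈ A := by
      refine ⟨h01, ?_⟩
      simp only [hu]
      rw [show φ 0 - φ 0 - (0:ℝ) • v 0 = 0 by simp, hNzero]
      simp
    have hAbdd : BddAbove A := ⟨1, fun t ht => ht.1.2⟩
    have hAne : A.Nonempty := ⟨0, h0A⟩
    set c := sSup A with hc
    have hc0 : 0 ≤ c := le_csSup hAbdd h0A
    have hc1 : c ≤ 1 := csSup_le hAne (fun t ht => ht.1.2)
    have hcI : c ∈ Set.Icc (0:ℝ) 1 := ⟨hc0, hc1⟩
    obtain ⟨δ, hδpos, hδ⟩ := hder c hcI ε hε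
    -- memberships
    have hmem : ∀ t ∈ Set.Icc (0:ℝ) 1, ∀ s ∈ Set.Icc (0:ℝ) 1,
        φ s - φ t - (s - t) • v t ∈ P := fun t ht s hs =>
      sub_mem (sub_mem (hφ s hs) (hφ t ht)) (Submodule.smul_mem _ _ (hv t ht))
    -- key estimate: for t ∈ A with c - t < δ, u c ≤ (M+ε) * c
    have hstep : ∀ t ∈ A, c - t < δ → u c ≤ (M + ε) * c := by
      intro t ht hdist
      have htI := ht.1
      rcases eq_or_lt_of_le (le_csSup hAbdd ht : t ≤ c) with heq | hlt
      · have h2 := ht.2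
        rw [heq] at h2; exact h2
      · -- t < c, use derivative at c with s = t - c
        have hs := hδ (t - c) (by intro h; exact absurd (sub_eq_zero.mp h) (ne_of_lt hlt))
          (by rw [abs_sub_comm, abs_of_pos (sub_pos.mpr hlt)]; linarith)
          (by rw [add_sub_cancel]; exact htI)
        rw [add_sub_cancel, abs_sub_comm, abs_of_pos (sub_pos.mpr hlt)] at hs
        -- φ c - φ 0 - c • v 0 = (φ t - φ 0 - t • v 0) + (c - t) • (v c - v 0) - X
        have hdecomp : φ c - φ 0 - c • v 0 =
            (φ t - φ 0 - t • v 0) + (c - t) • (v c - v 0) + (-(φ t - φ c - (t - c) • v c)) := by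
          simp only [smul_sub, sub_smul]
          abel
        have hX : φ t - φ c - (t - c) • v c ∈ P :=
          sub_mem (sub_mem (hφ t htI) (hφ c hcI)) (Submodule.smul_mem _ _ (hv c hcI))
        have hY : φ t - φ 0 - t • v 0 ∈ P :=
          sub_mem (sub_mem (hφ t htI) (hφ 0 h01)) (Submodule.smul_mem _ _ (hv 0 h01))
        have hZ : (c - t) • (v c - v 0) ∈ P :=
          Submodule.smul_mem _ _ (sub_mem (hv c hcI) (hv 0 h01))
        calc u c = N ((φ t - φ 0 - t • v 0) + (c - t) • (v c - v 0)
                + (-(φ t - φ c - (t - c) • v c))) := by simp only [hu]; rw [hdecomp]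
          _ ≤ N ((φ t - φ 0 - t • v 0) + (c - t) • (v c - v 0))
                + N (-(φ t - φ c - (t - c) • v c)) :=
              htri _ (add_mem hY hZ) _ (neg_mem hX)
          _ ≤ N (φ t - φ 0 - t • v 0) + N ((c - t) • (v c - v 0))
                + N (φ t - φ c - (t - c) • v c) := by
              rw [hNneg _ hX]; exact add_le_add (htri _ hY _ hZ) le_rfl
          _ ≤ (M + ε) * t + (c - t) * M + ε * (c - t) := by
              have h1 : N ((c - t) • (v c - v 0)) = (c - t) * N (v c - v 0) := by
                rw [hhom _ _ (sub_mem (hv c hcI) (hv 0 h01)),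
                  abs_of_pos (sub_pos.mpr hlt)]
              refine add_le_add (add_le_add ht.2 ?_) hs
              rw [h1]
              exact mul_le_mul_of_nonneg_left (hM c hcI) (le_of_lt (sub_pos.mpr hlt))
          _ = (M + ε) * c := by ring
    have hucA : u c ≤ (M + ε) * c := by
      rcases exists_lt_of_lt_csSup hAne (show c - δ/2 < c by linarith) with ⟨t, htA, htgt⟩
      exact hstep t htA (by linarith)
    -- c must equal 1
    rcases eq_or_lt_of_le hc1 with hceq | hclt
    · simp only [hu] at hucA ⊢
      rw [hceq] at hucA; exact hucA
    · exfalso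
      set s := min (δ/2) (1 - c) with hsdef
      have hspos : 0 < s := lt_min (by linarith) (by linarith)
      have hsle : s < δ := lt_of_le_of_lt (min_le_left _ _) (by linarith)
      have hcsI : c + s ∈ Set.Icc (0:ℝ) 1 :=
        ⟨by linarith, by have := min_le_right (δ/2) (1-c); linarith⟩
      have hds := hδ s (ne_of_gt hspos) (by rwa [abs_of_pos hspos]) hcsI
      rw [abs_of_pos hspos] at hds
      have hdecomp : φ (c+s) - φ 0 - (c+s) • v 0 =
          (φ c - φ 0 - c • v 0) + s • (v c - v 0) + (φ (c+s) - φ c - s • v c) := by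
        simp only [smul_sub, add_smul]
        abel
      have hX : φ (c+s) - φ c - s • v c ∈ P :=
        sub_mem (sub_mem (hφ _ hcsI) (hφ c hcI)) (Submodule.smul_mem _ _ (hv c hcI))
      have hY : φ c - φ 0 - c • v 0 ∈ P :=
        sub_mem (sub_mem (hφ c hcI) (hφ 0 h01)) (Submodule.smul_mem _ _ (hv 0 h01))
      have hZ : s • (v c - v 0) ∈ P :=
        Submodule.smul_mem _ _ (sub_mem (hv c hcI) (hv 0 h01))
      have hucs : u (c+s) ≤ (M + ε) * (c + s) := by
        calc u (c+s) = N ((φ c - φ 0 - c • v 0) + s • (v c - v 0)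
              + (φ (c+s) - φ c - s • v c)) := by simp only [hu]; rw [hdecomp]
          _ ≤ N (φ c - φ 0 - c • v 0) + N (s • (v c - v 0))
              + N (φ (c+s) - φ c - s • v c) :=
            le_trans (htri _ (add_mem hY hZ) _ hX) (add_le_add (htri _ hY _ hZ) le_rfl)
          _ ≤ (M + ε) * c + s * M + ε * s := by
            refine add_le_add (add_le_add hucA ?_) hds
            rw [hhom _ _ (sub_mem (hv c hcI) (hv 0 h01)), abs_of_pos hspos]
            exact mul_le_mul_of_nonneg_left (hM c hcI) (le_of_lt hspos)
          _ = (M + ε) * (c + s) := by ring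
      have : c + s ≤ c := le_csSup hAbdd ⟨hcsI, hucs⟩
      linarith
  have : ∀ ε > (0:ℝ), N (φ 1 - φ 0 - v 0) ≤ M + ε := by
    intro ε hε
    have h := key ε hε
    simp only [hu] at h
    simpa using h
  exact le_of_forall_pos_le_add this


section TangentHelp

variable {E : Type u} [AddCommGroup E] [Module ℝ E]

lemma ScScale.tangent_level (S : ScScale E) (m : ℕ) :
    S.tangent.level m = (S.level (m+1)).prod (S.level m) := rfl

lemma ScScale.tangent_lnorm (S : ScScale E) (m : ℕ) (p : E × E) :
    S.tangent.lnorm m p = S.lnorm (m+1) p.1 + S.lnorm m p.2 := rfl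

lemma ScScale.mem_tangent_level {S : ScScale E} {m : ℕ} {p : E × E} :
    p ∈ (S.tangent.level m : Set (E × E)) ↔ p.1 ∈ S.level (m+1) ∧ p.2 ∈ S.level m := by
  rw [SetLike.mem_coe, ScScale.tangent_level]
  exact Submodule.mem_prod

end TangentHelp

universe w₂


section ChainCore

variable {E : Type u} {F : Type v} {G : Type w₂}
  [AddCommGroup E] [Module ℝ E] [AddCommGroup F] [Module ℝ F]
  [AddCommGroup G] [Module ℝ G]

/-- Membership part of the tangent map being sc⁰, at level 0. -/
lemma sc1With_memT {SE : ScScale E} {SF : ScScale F} {U : Set E} {f : E → F}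
    {Df : E → (E →ₗ[ℝ] F)} (hDf : Sc1With SE SF U f Df)
    {z : E} (hzU : z ∈ U) (hz1 : z ∈ SE.level 1) {w : E} (hw : w ∈ SE.level 0) :
    f z ∈ SF.level 1 ∧ Df z w ∈ SF.level 0 := by
  have h := (hDf.2 0).1 (z, w)
    ⟨⟨hzU, hz1, hw⟩, ScScale.mem_tangent_level.mpr ⟨hz1, hw⟩⟩
  exact ScScale.mem_tangent_level.mp h

set_option maxHeartbeats 2000000 in
lemma sc1With_comp {SE : ScScale E} {SF : ScScale F} {SG : ScScale G}
    (hSE : SE.IsScBanach) (hSF : SF.IsScBanach) (hSG : SG.IsScBanach)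
    {U : Set E} {V : Set F} (hU : SE.IsOpenIn U) (hV : SF.IsOpenIn V)
    {f : E → F} {g : F → G} (hfV : ∀ x ∈ U, f x ∈ V)
    {Df : E → (E →ₗ[ℝ] F)} {Dg : F → (F →ₗ[ℝ] G)}
    (hDf : Sc1With SE SF U f Df) (hDg : Sc1With SF SG V g Dg) :
    Sc1With SE SG U (g ∘ f) (fun x => (Dg (f x)).comp (Df x)) := by
  -- the tangent map of `g ∘ f` is the composition of tangent maps
  have hTfV : ∀ p ∈ SE.tangentSet U, Tmap f Df p ∈ SF.tangentSet V := by
    intro p hp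
    obtain ⟨hp1U, hp1, hp2⟩ := hp
    obtain ⟨hm1, hm2⟩ := sc1With_memT hDf hp1U hp1 hp2
    exact ⟨hfV _ hp1U, hm1, hm2⟩
  constructor
  · -- pointwise part
    intro x hx
    obtain ⟨hxU, hx1⟩ := hx
    rw [SetLike.mem_coe] at hx1
    have hfx1 : f x ∈ SF.level 1 := (sc1With_memT hDf hxU hx1 (zero_mem _)).1
    have hfxV : f x ∈ V := hfV x hxU
    have hfxmem : f x ∈ V ∩ (SF.level 1 : Set F) := ⟨hfxV, hfx1⟩
    have hxmem : x ∈ U ∩ (SE.level 1 : Set E) := ⟨hxU, hx1⟩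
    obtain ⟨Cf, hCf⟩ := (hDf.1 x hxmem).1
    obtain ⟨Cg, hCg⟩ := (hDg.1 (f x) hfxmem).1
    set Cg' := max Cg 0 with hCg'
    have hCg'0 : 0 ≤ Cg' := le_max_right _ _
    have hCgbd : ∀ w ∈ SF.level 0, SG.lnorm 0 (Dg (f x) w) ≤ Cg' * SF.lnorm 0 w := by
      intro w hw
      calc SG.lnorm 0 (Dg (f x) w) ≤ Cg * SF.lnorm 0 w := hCg w hw
        _ ≤ Cg' * SF.lnorm 0 w :=
          mul_le_mul_of_nonneg_right (le_max_left _ _) (hSF.nonneg_s2 0 w)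
    constructor
    · -- boundedness of the composed linearization
      refine ⟨Cg' * max Cf 0, fun w hw => ?_⟩
      have hDfw : Df x w ∈ SF.level 0 := (sc1With_memT hDf hxU hx1 hw).2
      calc SG.lnorm 0 (((Dg (f x)).comp (Df x)) w)
          = SG.lnorm 0 (Dg (f x) (Df x w)) := rfl
        _ ≤ Cg' * SF.lnorm 0 (Df x w) := hCgbd _ hDfw
        _ ≤ Cg' * (max Cf 0 * SE.lnorm 0 w) := by
            refine mul_le_mul_of_nonneg_left ?_ hCg'0
            calc SF.lnorm 0 (Df x w) ≤ Cf * SE.lnorm 0 w := hCf w hw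
              _ ≤ max Cf 0 * SE.lnorm 0 w :=
                mul_le_mul_of_nonneg_right (le_max_left _ _) (hSE.nonneg_s2 0 w)
        _ = Cg' * max Cf 0 * SE.lnorm 0 w := by ring
    · -- the differentiability estimate
      intro ε hε
      by_contra hcon
      push_neg at hcon
      -- choose a sequence of bad increments
      have hchoice : ∀ n : ℕ, ∃ h, h ∈ (SE.level 1 : Set E) ∧ x + h ∈ U ∧
          SE.lnorm 1 h < 1/((n:ℝ)+1) ∧
          ε * SE.lnorm 1 h <
            SG.lnorm 0 ((g ∘ f) (x + h) - (g ∘ f) x - ((Dg (f x)).comp (Df x)) h) := by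
        intro n
        obtain ⟨h, hh1, h2, h3, h4⟩ := hcon (1/((n:ℝ)+1)) (by positivity)
        exact ⟨h, hh1, h2, h3, h4⟩
      choose h0 hh1 hhU hhsmall hhbig using hchoice
      have hh1' : ∀ n, h0 n ∈ SE.level 1 := fun n => hh1 n
      have hrpos : ∀ n, 0 < SE.lnorm 1 (h0 n) := by
        intro n
        rcases lt_or_eq_of_le (hSE.nonneg_s2 1 (h0 n)) with hlt | heq
        · exact hlt
        · exfalso
          have hz : h0 n = 0 := hSE.2.2.2.2.1 1 (h0 n) (hh1' n) heq.symm
          have hb := hhbig n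
          rw [hz] at hb
          simp [hSE.norm_zero, hSG.norm_zero] at hb
      -- normalized sequence
      set τ : ℕ → E := fun n => (SE.lnorm 1 (h0 n))⁻¹ • h0 n with hτdef
      have hτ1 : ∀ n, τ n ∈ SE.level 1 :=
        fun n => Submodule.smul_mem _ _ (hh1' n)
      have hτnorm : ∀ n, SE.lnorm 1 (τ n) = 1 := by
        intro n
        have := hSE.norm_smul 1 (SE.lnorm 1 (h0 n))⁻¹ (hh1' n)
        rw [hτdef]
        simp only []
        rw [this, abs_inv, abs_of_pos (hrpos n),
          inv_mul_cancel₀ (ne_of_gt (hrpos n))]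
      -- compactness: extract a subsequence Cauchy on level 0
      obtain ⟨φ, hφmono, hφcauchy⟩ := hSE.2.2.2.2.2.2.2.1 0 τ (fun k => hτ1 k)
        (fun k => le_of_eq (hτnorm k))
      -- completeness: the subsequence converges to some τs in level 0
      obtain ⟨τs, hτsmem, hτslim⟩ := hSE.2.2.2.2.2.2.1 0 (fun k => τ (φ k))
        (fun k => hSE.1 (by norm_num) (hτ1 (φ k))) hφcauchy
      -- convenient abbreviations for the subsequence
      set H : ℕ → E := fun n => h0 (φ n) with hHdef
      set R : ℕ → ℝ := fun n => SE.lnorm 1 (h0 (φ n)) with hRdef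
      have hH1 : ∀ n, H n ∈ SE.level 1 := fun n => hh1' (φ n)
      have hH0 : ∀ n, H n ∈ SE.level 0 := fun n => hSE.1 (by norm_num) (hH1 n)
      have hHU : ∀ n, x + H n ∈ U := fun n => hhU (φ n)
      have hRpos : ∀ n, 0 < R n := fun n => hrpos (φ n)
      have hRval : ∀ n, R n = SE.lnorm 1 (H n) := fun n => rfl
      have hHbig : ∀ n, ε * R n <
          SG.lnorm 0 ((g ∘ f) (x + H n) - (g ∘ f) x - ((Dg (f x)).comp (Df x)) (H n)) :=
        fun n => hhbig (φ n)
      have hTval : ∀ n, τ (φ n) = (R n)⁻¹ • H n := fun n => rfl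
      have hRsmall : ∀ n, R n < 1/((φ n : ℝ)+1) := fun n => hhsmall (φ n)
      clear_value τ H R
      -- R n → 0
      have hRlim : ∀ η > (0:ℝ), ∃ K, ∀ n ≥ K, R n < η := by
        intro η hη
        obtain ⟨K, hK⟩ := exists_nat_gt (1/η)
        refine ⟨K, fun n hn => ?_⟩
        have h1 : (1:ℝ)/η < (n:ℝ) + 1 := by
          have : (K:ℝ) ≤ (n:ℝ) := Nat.cast_le.mpr hn
          linarith
        have h2 : 1/((n:ℝ)+1) < η := by
          rw [div_lt_iff₀ (by positivity)]
          rw [div_lt_iff₀ hη] at h1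
          nlinarith
        have h3 : R n < 1/((φ n :ℝ)+1) := hRsmall n
        have h4 : (1:ℝ)/((φ n:ℝ)+1) ≤ 1/((n:ℝ)+1) := by
          apply one_div_le_one_div_of_le (by positivity)
          have : (n:ℝ) ≤ (φ n : ℝ) := Nat.cast_le.mpr (hφmono.le_apply)
          linarith
        linarith
      -- the increments of f
      set k : ℕ → F := fun n => f (x + H n) - f x with hkdef
      have hkval : ∀ n, k n = f (x + H n) - f x := fun _ => rfl
      clear_value k
      have hxH1 : ∀ n, x + H n ∈ SE.level 1 := fun n => add_mem hx1 (hH1 n)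
      have hk1 : ∀ n, k n ∈ SF.level 1 := by
        intro n
        rw [hkval n]
        exact sub_mem (sc1With_memT hDf (hHU n) (hxH1 n) (zero_mem _)).1 hfx1
      have hk0 : ∀ n, k n ∈ SF.level 0 := fun n => hSF.1 (by norm_num) (hk1 n)
      -- k n → 0 in level 1 (continuity of Tf at (x,0))
      have hklim1 : ∀ η > (0:ℝ), ∃ K, ∀ n ≥ K, SF.lnorm 1 (k n) < η := by
        intro η hη
        obtain ⟨δ, hδpos, hδ⟩ := (hDf.2 0).2 (x, (0:E))
          ⟨⟨hxU, hx1, zero_mem _⟩, ScScale.mem_tangent_level.mpr ⟨hx1, zero_mem _⟩⟩ η hη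
        obtain ⟨K, hK⟩ := hRlim δ hδpos
        refine ⟨K, fun n hn => ?_⟩
        have hq : (x + H n, (0:E)) ∈ SE.tangentSet U ∩ (SE.tangent.level 0 : Set (E×E)) :=
          ⟨⟨hHU n, hxH1 n, zero_mem _⟩, ScScale.mem_tangent_level.mpr ⟨hxH1 n, zero_mem _⟩⟩
        have hsub : ((x + H n, (0:E)) - (x, 0)) = (H n, (0:E)) := by
          rw [Prod.mk_sub_mk]; simp
        have hdist : SE.tangent.lnorm 0 ((x + H n, (0:E)) - (x, 0)) < δ := by
          rw [hsub, ScScale.tangent_lnorm]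
          have h01 : SE.lnorm (0+1) (H n) = R n := (hRval n).symm
          rw [h01, hSE.norm_zero, add_zero]
          exact hK n hn
        have hres := hδ (x + H n, 0) hq hdist
        have he : Tmap f Df (x + H n, (0:E)) - Tmap f Df (x, 0) = (k n, (0:F)) := by
          rw [hkval n]
          simp only [Tmap, Prod.mk_sub_mk, map_zero, sub_zero]
        rw [he, ScScale.tangent_lnorm] at hres
        rw [hSF.norm_zero, add_zero] at hres
        exact hres
      -- k n → 0 in level 0
      obtain ⟨C01, hC01pos, hC01⟩ := hSF.2.2.2.2.2.1 0 1 (by norm_num)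
      have hklim0 : ∀ η > (0:ℝ), ∃ K, ∀ n ≥ K, SF.lnorm 0 (k n) < η := by
        intro η hη
        obtain ⟨K, hK⟩ := hklim1 (η/C01) (by positivity)
        refine ⟨K, fun n hn => ?_⟩
        calc SF.lnorm 0 (k n) ≤ C01 * SF.lnorm 1 (k n) := hC01 _ (hk1 n)
          _ < C01 * (η/C01) := by
            exact mul_lt_mul_of_pos_left (hK n hn) hC01pos
          _ = η := by field_simp
      -- the sc-differentiability estimate of f along the sequence
      have hderf : ∀ η > (0:ℝ), ∃ K, ∀ n ≥ K,
          SF.lnorm 0 (k n - Df x (H n)) ≤ η * R n := by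
        intro η hη
        obtain ⟨δ, hδpos, hδ⟩ := (hDf.1 x hxmem).2 η hη
        obtain ⟨K, hK⟩ := hRlim δ hδpos
        refine ⟨K, fun n hn => ?_⟩
        rw [hkval n, hRval n]
        exact hδ (H n) (hH1 n) (hHU n) (by rw [← hRval n]; exact hK n hn)
      -- the quotients a n and their limit a
      set aa : ℕ → F := fun n => (R n)⁻¹ • k n with haadef
      have hav : ∀ n, aa n = (R n)⁻¹ • k n := fun _ => rfl
      clear_value aa
      set a : F := Df x τs with hadef
      clear_value a
      have ha0 : a ∈ SF.level 0 := by
        rw [hadef]; exact (sc1With_memT hDf hxU hx1 hτsmem).2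
      have haa0 : ∀ n, aa n ∈ SF.level 0 := by
        intro n
        rw [hav n]
        exact Submodule.smul_mem _ _ (hk0 n)
      have hDfH0 : ∀ n, Df x (H n) ∈ SF.level 0 :=
        fun n => (sc1With_memT hDf hxU hx1 (hH0 n)).2
      obtain ⟨Cf', hCf'0, hCfbd⟩ :
          ∃ C, 0 ≤ C ∧ ∀ w ∈ SE.level 0, SF.lnorm 0 (Df x w) ≤ C * SE.lnorm 0 w := by
        refine ⟨max Cf 0, le_max_right _ _, fun w hw => ?_⟩
        calc SF.lnorm 0 (Df x w) ≤ Cf * SE.lnorm 0 w := hCf w hw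
          _ ≤ max Cf 0 * SE.lnorm 0 w :=
            mul_le_mul_of_nonneg_right (le_max_left _ _) (hSE.nonneg_s2 0 w)
      have haalim : ∀ η > (0:ℝ), ∃ K, ∀ n ≥ K, SF.lnorm 0 (aa n - a) < η := by
        intro η hη
        obtain ⟨K₁, hK₁⟩ := hderf (η/2) (by positivity)
        obtain ⟨K₂, hK₂⟩ := hτslim (η/(2*(Cf'+1))) (by positivity)
        refine ⟨max K₁ K₂, fun n hn => ?_⟩
        have hn₁ : n ≥ K₁ := le_trans (le_max_left _ _) hn
        have hn₂ : n ≥ K₂ := le_trans (le_max_right _ _) hn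
        have hdecomp : aa n - a =
            (R n)⁻¹ • (k n - Df x (H n)) + Df x (τ (φ n) - τs) := by
          rw [hav n, hadef, map_sub, hTval n, map_smul, smul_sub]
          abel
        have hmem1 : (R n)⁻¹ • (k n - Df x (H n)) ∈ SF.level 0 :=
          Submodule.smul_mem _ _ (sub_mem (hk0 n) (hDfH0 n))
        have hmem2 : Df x (τ (φ n) - τs) ∈ SF.level 0 :=
          (sc1With_memT hDf hxU hx1 (sub_mem (hSE.1 (by norm_num) (hτ1 (φ n))) hτsmem)).2
        have ht1 : SF.lnorm 0 ((R n)⁻¹ • (k n - Df x (H n))) ≤ η/2 := by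
          rw [hSF.norm_smul 0 _ (sub_mem (hk0 n) (hDfH0 n)), abs_inv,
            abs_of_pos (hRpos n)]
          have := hK₁ n hn₁
          calc (R n)⁻¹ * SF.lnorm 0 (k n - Df x (H n))
              ≤ (R n)⁻¹ * (η/2 * R n) := by
                exact mul_le_mul_of_nonneg_left this
                  (le_of_lt (inv_pos.mpr (hRpos n)))
            _ = η/2 := by
                rw [mul_comm (η/2) (R n), ← mul_assoc,
                  inv_mul_cancel₀ (ne_of_gt (hRpos n)), one_mul]
        have ht2 : SF.lnorm 0 (Df x (τ (φ n) - τs)) < η/2 := by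
          calc SF.lnorm 0 (Df x (τ (φ n) - τs))
              ≤ Cf' * SE.lnorm 0 (τ (φ n) - τs) :=
                hCfbd _ (sub_mem (hSE.1 (by norm_num) (hτ1 (φ n))) hτsmem)
            _ ≤ (Cf'+1) * SE.lnorm 0 (τ (φ n) - τs) :=
                mul_le_mul_of_nonneg_right (by linarith) (hSE.nonneg_s2 0 _)
            _ < (Cf'+1) * (η/(2*(Cf'+1))) :=
                mul_lt_mul_of_pos_left (hK₂ n hn₂) (by linarith)
            _ = η/2 := by field_simp
        calc SF.lnorm 0 (aa n - a)
            ≤ SF.lnorm 0 ((R n)⁻¹ • (k n - Df x (H n)))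
              + SF.lnorm 0 (Df x (τ (φ n) - τs)) := by
              rw [hdecomp]; exact hSF.tri_s2 0 hmem1 hmem2
          _ < η/2 + η/2 := by
              exact add_lt_add_of_le_of_lt ht1 ht2
          _ = η := by ring
      -- eventually the whole segment f x + t • k n lies in V
      have hfx0 : f x ∈ SF.level 0 := hSF.1 (by norm_num) hfx1
      have hseg : ∃ K, ∀ n ≥ K, ∀ t ∈ Set.Icc (0:ℝ) 1, f x + t • k n ∈ V := by
        obtain ⟨εV, hεVpos, hεV⟩ := hV.2 (f x) hfxV
        obtain ⟨K, hK⟩ := hklim0 εV hεVpos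
        refine ⟨K, fun n hn t ht => ?_⟩
        refine hεV (f x + t • k n)
          (add_mem hfx0 (Submodule.smul_mem _ _ (hk0 n))) ?_
        rw [add_sub_cancel_left, hSF.norm_smul 0 _ (hk0 n)]
        calc |t| * SF.lnorm 0 (k n) ≤ 1 * SF.lnorm 0 (k n) := by
              apply mul_le_mul_of_nonneg_right _ (hSF.nonneg_s2 0 _)
              rw [abs_of_nonneg ht.1]; exact ht.2
          _ = SF.lnorm 0 (k n) := one_mul _
          _ < εV := hK n hn
      -- continuity of Tg at (f x, a)
      obtain ⟨δ₂, hδ₂pos, hδ₂⟩ := (hDg.2 0).2 (f x, a)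
        ⟨⟨hfxV, hfx1, ha0⟩, ScScale.mem_tangent_level.mpr ⟨hfx1, ha0⟩⟩ (ε/6) (by positivity)
      -- choose the final index
      obtain ⟨K₁, hK₁⟩ := hderf (ε/(3*(Cg'+1))) (by positivity)
      obtain ⟨K₂, hK₂⟩ := hseg
      obtain ⟨K₃, hK₃⟩ := hklim1 (δ₂/2) (by positivity)
      obtain ⟨K₄, hK₄⟩ := haalim (δ₂/2) (by positivity)
      set n := max (max K₁ K₂) (max K₃ K₄) with hndef
      have hn₁ := hK₁ n (le_trans (le_max_left _ _) (le_max_left _ _))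
      have hn₂ := hK₂ n (le_trans (le_max_right _ _) (le_max_left _ _))
      have hn₃ := hK₃ n (le_trans (le_max_left _ _) (le_max_right _ _))
      have hn₄ := hK₄ n (le_trans (le_max_right _ _) (le_max_right _ _))
      clear_value n
      -- memberships along the segment
      have hseg1 : ∀ t ∈ Set.Icc (0:ℝ) 1, f x + t • k n ∈ SF.level 1 :=
        fun t _ => add_mem hfx1 (Submodule.smul_mem _ _ (hk1 n))
      -- uniform Tg estimates
      have hE1 : ∀ t ∈ Set.Icc (0:ℝ) 1,
          SG.lnorm 0 (Dg (f x + t • k n) (aa n) - Dg (f x) a) < ε/6 := by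
        intro t ht
        have hq : (f x + t • k n, aa n) ∈
            SF.tangentSet V ∩ (SF.tangent.level 0 : Set (F×F)) :=
          ⟨⟨hn₂ t ht, hseg1 t ht, haa0 n⟩,
            ScScale.mem_tangent_level.mpr ⟨hseg1 t ht, haa0 n⟩⟩
        have hsub : ((f x + t • k n, aa n) - (f x, a)) = (t • k n, aa n - a) := by
          rw [Prod.mk_sub_mk]; simp
        have hdist : SF.tangent.lnorm 0 ((f x + t • k n, aa n) - (f x, a)) < δ₂ := by
          rw [hsub, ScScale.tangent_lnorm]
          have h1 : SF.lnorm (0+1) (t • k n) ≤ SF.lnorm 1 (k n) := by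
            have := hSF.norm_smul 1 t (hk1 n)
            rw [show (0+1 : ℕ) = 1 from rfl, this]
            calc |t| * SF.lnorm 1 (k n) ≤ 1 * SF.lnorm 1 (k n) := by
                  apply mul_le_mul_of_nonneg_right _ (hSF.nonneg_s2 1 _)
                  rw [abs_of_nonneg ht.1]; exact ht.2
              _ = SF.lnorm 1 (k n) := one_mul _
          have h2 := hn₄
          linarith [hn₃]
        have hres := hδ₂ (f x + t • k n, aa n) hq hdist
        have he : Tmap g Dg (f x + t • k n, aa n) - Tmap g Dg (f x, a)
            = (g (f x + t • k n) - g (f x), Dg (f x + t • k n) (aa n) - Dg (f x) a) := by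
          rw [Tmap, Tmap, Prod.mk_sub_mk]
        rw [he, ScScale.tangent_lnorm] at hres
        have := hSG.nonneg_s2 (0+1) (g (f x + t • k n) - g (f x))
        simp only [] at hres ⊢
        linarith
      have hE2 : SG.lnorm 0 (Dg (f x) (aa n) - Dg (f x) a) < ε/6 := by
        have hq : (f x, aa n) ∈
            SF.tangentSet V ∩ (SF.tangent.level 0 : Set (F×F)) :=
          ⟨⟨hfxV, hfx1, haa0 n⟩, ScScale.mem_tangent_level.mpr ⟨hfx1, haa0 n⟩⟩
        have hsub : ((f x, aa n) - (f x, a)) = ((0:F), aa n - a) := by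
          rw [Prod.mk_sub_mk]; simp
        have hdist : SF.tangent.lnorm 0 ((f x, aa n) - (f x, a)) < δ₂ := by
          rw [hsub, ScScale.tangent_lnorm, hSF.norm_zero, zero_add]
          linarith
        have hres := hδ₂ (f x, aa n) hq hdist
        have he : Tmap g Dg (f x, aa n) - Tmap g Dg (f x, a)
            = (g (f x) - g (f x), Dg (f x) (aa n) - Dg (f x) a) := by
          rw [Tmap, Tmap, Prod.mk_sub_mk]
        rw [he, ScScale.tangent_lnorm] at hres
        have := hSG.nonneg_s2 (0+1) (g (f x) - g (f x))
        linarith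
      -- memberships for the MVT data
      have hgseg1 : ∀ t ∈ Set.Icc (0:ℝ) 1, g (f x + t • k n) ∈ SG.level 1 :=
        fun t ht => (sc1With_memT hDg (hn₂ t ht) (hseg1 t ht) (zero_mem _)).1
      have hDgseg0 : ∀ t ∈ Set.Icc (0:ℝ) 1, ∀ w ∈ SF.level 0,
          Dg (f x + t • k n) w ∈ SG.level 0 :=
        fun t ht w hw => (sc1With_memT hDg (hn₂ t ht) (hseg1 t ht) hw).2
      have hDgfx0 : ∀ w ∈ SF.level 0, Dg (f x) w ∈ SG.level 0 :=
        fun w hw => (sc1With_memT hDg hfxV hfx1 hw).2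
      -- mean value estimate
      have hDER : ∀ t ∈ Set.Icc (0:ℝ) 1, ∀ ε₀ > (0:ℝ), ∃ δ > (0:ℝ), ∀ s : ℝ,
          s ≠ 0 → |s| < δ → t + s ∈ Set.Icc (0:ℝ) 1 →
          SG.lnorm 0 (g (f x + (t+s) • k n) - g (f x + t • k n)
            - s • Dg (f x + t • k n) (k n)) ≤ ε₀ * |s| := by
        intro t ht ε₀ hε₀
        set L := SF.lnorm 1 (k n) with hLdef
        have hL0 : 0 ≤ L := by rw [hLdef]; exact hSF.nonneg_s2 1 _
        have hL1 : (0:ℝ) < L + 1 := by linarith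
        obtain ⟨δ', hδ'pos, hδ'⟩ := (hDg.1 (f x + t • k n) ⟨hn₂ t ht, hseg1 t ht⟩).2
          (ε₀/(L+1)) (div_pos hε₀ hL1)
        refine ⟨δ'/(L+1), div_pos hδ'pos hL1, fun s hs0 hsδ hts => ?_⟩
        have hsum : (f x + t • k n) + s • k n = f x + (t+s) • k n := by
          rw [add_smul]; abel
        have hVmem : (f x + t • k n) + s • k n ∈ V := by
          rw [hsum]; exact hn₂ (t+s) hts
        have hlt : SF.lnorm 1 (s • k n) < δ' := by
          rw [hSF.norm_smul 1 s (hk1 n), ← hLdef]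
          calc |s| * L ≤ |s| * (L+1) :=
              mul_le_mul_of_nonneg_left (by linarith) (abs_nonneg s)
            _ < δ'/(L+1) * (L+1) :=
              mul_lt_mul_of_pos_right hsδ (by linarith)
            _ = δ' := div_mul_cancel₀ _ (by linarith)
        have happ := hδ' (s • k n) (Submodule.smul_mem _ _ (hk1 n)) hVmem hlt
        rw [hSF.norm_smul 1 s (hk1 n), ← hLdef] at happ
        have heq : g ((f x + t • k n) + s • k n) - g (f x + t • k n)
            - Dg (f x + t • k n) (s • k n)
            = g (f x + (t+s) • k n) - g (f x + t • k n)
            - s • Dg (f x + t • k n) (k n) := by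
          rw [map_smul, hsum]
        rw [heq] at happ
        calc SG.lnorm 0 (g (f x + (t+s) • k n) - g (f x + t • k n)
              - s • Dg (f x + t • k n) (k n)) ≤ ε₀/(L+1) * (|s| * L) := happ
          _ ≤ ε₀ * |s| := by
            rw [div_mul_eq_mul_div, div_le_iff₀ (by linarith : (0:ℝ) < L+1)]
            nlinarith [abs_nonneg s, le_of_lt hε₀]
      have hMbound : ∀ t ∈ Set.Icc (0:ℝ) 1,
          SG.lnorm 0 (Dg (f x + t • k n) (k n) - Dg (f x + (0:ℝ) • k n) (k n))
            ≤ (ε/3) * R n := by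
        intro t ht
        have hv0 : f x + (0:ℝ) • k n = f x := by rw [zero_smul, add_zero]
        rw [hv0]
        have hkR : k n = R n • aa n := by
          rw [hav n, smul_inv_smul₀ (ne_of_gt (hRpos n))]
        have hde : Dg (f x + t • k n) (k n) - Dg (f x) (k n)
            = R n • (Dg (f x + t • k n) (aa n) - Dg (f x) (aa n)) := by
          have e1 : Dg (f x + t • k n) (R n • aa n)
              = R n • Dg (f x + t • k n) (aa n) := map_smul _ _ _
          have e2 : Dg (f x) (R n • aa n) = R n • Dg (f x) (aa n) := map_smul _ _ _
          rw [smul_sub, ← e1, ← e2, ← hkR]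
        rw [hde, hSG.norm_smul 0 _ (sub_mem (hDgseg0 t ht _ (haa0 n)) (hDgfx0 _ (haa0 n))),
          abs_of_pos (hRpos n)]
        have hinner : SG.lnorm 0 (Dg (f x + t • k n) (aa n) - Dg (f x) (aa n)) ≤ ε/3 := by
          have hdec : Dg (f x + t • k n) (aa n) - Dg (f x) (aa n)
              = (Dg (f x + t • k n) (aa n) - Dg (f x) a)
                + (-(Dg (f x) (aa n) - Dg (f x) a)) := by abel
          have hm1 : Dg (f x + t • k n) (aa n) - Dg (f x) a ∈ SG.level 0 :=
            sub_mem (hDgseg0 t ht _ (haa0 n)) (hDgfx0 _ ha0)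
          have hm2 : Dg (f x) (aa n) - Dg (f x) a ∈ SG.level 0 :=
            sub_mem (hDgfx0 _ (haa0 n)) (hDgfx0 _ ha0)
          calc SG.lnorm 0 (Dg (f x + t • k n) (aa n) - Dg (f x) (aa n))
              ≤ SG.lnorm 0 (Dg (f x + t • k n) (aa n) - Dg (f x) a)
                + SG.lnorm 0 (-(Dg (f x) (aa n) - Dg (f x) a)) := by
                rw [hdec]; exact hSG.tri_s2 0 hm1 (neg_mem hm2)
            _ = SG.lnorm 0 (Dg (f x + t • k n) (aa n) - Dg (f x) a)
                + SG.lnorm 0 (Dg (f x) (aa n) - Dg (f x) a) := by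
                rw [hSG.norm_neg 0 hm2]
            _ ≤ ε/6 + ε/6 := add_le_add (le_of_lt (hE1 t ht)) (le_of_lt hE2)
            _ = ε/3 := by ring
        calc R n * SG.lnorm 0 (Dg (f x + t • k n) (aa n) - Dg (f x) (aa n))
            ≤ R n * (ε/3) := mul_le_mul_of_nonneg_left hinner (le_of_lt (hRpos n))
          _ = (ε/3) * R n := mul_comm _ _
      have hmvt : SG.lnorm 0 (g (f x + k n) - g (f x) - Dg (f x) (k n)) ≤ (ε/3) * R n := by
        have h := sc_mvt (SG.level 0) (SG.lnorm 0) (hSG.nonneg_s2 0)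
          (fun p hp q hq => hSG.tri_s2 0 hp hq) (fun c p hp => hSG.norm_smul 0 c hp)
          (fun t => g (f x + t • k n)) (fun t => Dg (f x + t • k n) (k n))
          (fun t ht => hSG.1 (by norm_num) (hgseg1 t ht))
          (fun t ht => hDgseg0 t ht (k n) (hk0 n))
          hDER hMbound
        rw [one_smul, zero_smul, add_zero] at h
        exact h
      -- bound on the correction term
      have hcorr : SG.lnorm 0 (Dg (f x) (k n - Df x (H n))) ≤ (ε/3) * R n := by
        calc SG.lnorm 0 (Dg (f x) (k n - Df x (H n)))
            ≤ Cg' * SF.lnorm 0 (k n - Df x (H n)) :=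
              hCgbd _ (sub_mem (hk0 n) (hDfH0 n))
          _ ≤ Cg' * (ε/(3*(Cg'+1)) * R n) :=
              mul_le_mul_of_nonneg_left hn₁ hCg'0
          _ ≤ (ε/3) * R n := by
              have h1 : Cg' * (ε/(3*(Cg'+1))) ≤ ε/3 := by
                rw [← mul_div_assoc,
                  div_le_div_iff₀ (by positivity) (by norm_num : (0:ℝ) < 3)]
                nlinarith [hCg'0, le_of_lt hε]
              calc Cg' * (ε/(3*(Cg'+1)) * R n) = (Cg' * (ε/(3*(Cg'+1)))) * R n := by ring
                _ ≤ (ε/3) * R n :=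
                  mul_le_mul_of_nonneg_right h1 (le_of_lt (hRpos n))
      -- assemble the contradiction
      have hyk : f x + k n = f (x + H n) := by
        rw [hkval n]
        abel
      have hsubE : Dg (f x) (k n - Df x (H n))
          = Dg (f x) (k n) - Dg (f x) (Df x (H n)) := map_sub _ _ _
      have hDeq : (g ∘ f) (x + H n) - (g ∘ f) x - ((Dg (f x)).comp (Df x)) (H n)
          = (g (f x + k n) - g (f x) - Dg (f x) (k n))
            + (Dg (f x) (k n) - Dg (f x) (Df x (H n))) := by
        have h3 : ((Dg (f x)).comp (Df x)) (H n) = Dg (f x) (Df x (H n)) := rfl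
        have h4 : (g ∘ f) (x + H n) = g (f x + k n) := by rw [hyk]; rfl
        have h5 : (g ∘ f) x = g (f x) := rfl
        rw [h4, h5, h3]
        abel
      have hmemA : g (f x + k n) - g (f x) - Dg (f x) (k n) ∈ SG.level 0 := by
        have h1 : g (f x + k n) ∈ SG.level 0 := by
          rw [hyk]
          exact hSG.1 (by norm_num)
            (sc1With_memT hDg (hfV _ (hHU n)) (by rw [← hyk]; exact add_mem hfx1 (hk1 n))
              (zero_mem _)).1
        have h2 : g (f x) ∈ SG.level 0 := hSG.1 (by norm_num)
          (sc1With_memT hDg hfxV hfx1 (zero_mem _)).1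
        exact sub_mem (sub_mem h1 h2) (hDgfx0 _ (hk0 n))
      have hmemB : Dg (f x) (k n) - Dg (f x) (Df x (H n)) ∈ SG.level 0 := by
        rw [← hsubE]
        exact hDgfx0 _ (sub_mem (hk0 n) (hDfH0 n))
      have hcorr' : SG.lnorm 0 (Dg (f x) (k n) - Dg (f x) (Df x (H n))) ≤ (ε/3) * R n := by
        rw [← hsubE]; exact hcorr
      have hfinal : SG.lnorm 0 ((g ∘ f) (x + H n) - (g ∘ f) x
          - ((Dg (f x)).comp (Df x)) (H n)) ≤ (2*ε/3) * R n := by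
        rw [hDeq]
        calc SG.lnorm 0 ((g (f x + k n) - g (f x) - Dg (f x) (k n))
              + (Dg (f x) (k n) - Dg (f x) (Df x (H n))))
            ≤ SG.lnorm 0 (g (f x + k n) - g (f x) - Dg (f x) (k n))
              + SG.lnorm 0 (Dg (f x) (k n) - Dg (f x) (Df x (H n))) :=
              hSG.tri_s2 0 hmemA hmemB
          _ ≤ (ε/3) * R n + (ε/3) * R n := add_le_add hmvt hcorr'
          _ = (2*ε/3) * R n := by ring
      have := hHbig n
      nlinarith [hRpos n, hε]
  · -- tangent map is sc⁰
    have hTeq : Tmap (g ∘ f) (fun x => (Dg (f x)).comp (Df x))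
        = (Tmap g Dg) ∘ (Tmap f Df) := rfl
    rw [hTeq]
    exact Sc0.comp hDf.2 hDg.2 hTfV

end ChainCore

universe w

/-- Chain rule for sc¹-maps.  If `f : U → V` and `g : V → G` are sc¹,
then `g ∘ f` is sc¹ and `T(g ∘ f) = (Tg) ∘ (Tf)`; the latter is expressed both by
the fact that the composed linearizations `x ↦ Dg (f x) ∘ Df x` witness sc¹ for
`g ∘ f`, and by the pointwise identity of tangent maps on `TU`. -/
theorem sc1_chain_rule {E : Type u} {F : Type v} {G : Type w}
    [AddCommGroup E] [Module ℝ E] [AddCommGroup F] [Module ℝ F]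
    [AddCommGroup G] [Module ℝ G]
    (SE : ScScale E) (SF : ScScale F) (SG : ScScale G)
    (hSE : SE.IsScBanach) (hSF : SF.IsScBanach) (hSG : SG.IsScBanach)
    (U : Set E) (V : Set F) (hU : SE.IsOpenIn U) (hV : SF.IsOpenIn V)
    (f : E → F) (g : F → G) (hfV : ∀ x ∈ U, f x ∈ V)
    (hf : IsSc1 SE SF U f) (hg : IsSc1 SF SG V g) :
    IsSc1 SE SG U (g ∘ f) ∧
    ∀ (Df : E → (E →ₗ[ℝ] F)) (Dg : F → (F →ₗ[ℝ] G)),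
      Sc1With SE SF U f Df → Sc1With SF SG V g Dg →
        Sc1With SE SG U (g ∘ f) (fun x => (Dg (f x)).comp (Df x)) ∧
        ∀ p ∈ SE.tangentSet U,
          Tmap (g ∘ f) (fun x => (Dg (f x)).comp (Df x)) p
            = Tmap g Dg (Tmap f Df p) := by
  have main : ∀ (Df : E → (E →ₗ[ℝ] F)) (Dg : F → (F →ₗ[ℝ] G)),
      Sc1With SE SF U f Df → Sc1With SF SG V g Dg →
      Sc1With SE SG U (g ∘ f) (fun x => (Dg (f x)).comp (Df x)) :=
    fun Df Dg hDf hDg => sc1With_comp hSE hSF hSG hU hV hfV hDf hDg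
  obtain ⟨hf0, Df₀, hDf₀⟩ := hf
  obtain ⟨hg0, Dg₀, hDg₀⟩ := hg
  refine ⟨⟨Sc0.comp hf0 hg0 hfV, fun x => (Dg₀ (f x)).comp (Df₀ x),
    main Df₀ Dg₀ hDf₀ hDg₀⟩, fun Df Dg hDf hDg => ⟨main Df Dg hDf hDg, fun p _ => rfl⟩⟩
end

section
/- Let f : 𝒪(V ⊕ E, 0) → (E, 0) be an sc⁰-contraction germ, f(v,u) = u − B(v,u). Then there exists a germ δ : 𝒪(V, 0) → (E, 0) solving f(v, δ(v)) = 0 (equivalently δ(v) = B(v, δ(v))): for every level m there is a neighborhood of 0 in V on which δ is defined, takes values in Eₘ, is the unique solution of u = B(v,u) among u ∈ Eₘ near 0, and the map v ↦ δ(v) ∈ Eₘ is continuous; in particular δ is an sc⁰-germ. -/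
universe u v

/-- A partial cone in a finite-dimensional vector space `A`: the image of
`[0,∞)^k × ℝ^{n-k}` under a linear isomorphism `ℝⁿ ≅ A`. -/
def IsPartialCone {A : Type v} [AddCommGroup A] [Module ℝ A] (C : Set A) : Prop :=
  ∃ (n k : ℕ) (T : A ≃ₗ[ℝ] (Fin n → ℝ)), k ≤ n ∧
    C = {a : A | ∀ i : Fin n, (i : ℕ) < k → 0 ≤ T a i}


/-- Picard iterates of `B` at parameter `v`, starting from `0`. -/
def iterB {A : Type v} {E : Type u} [Zero E] (B : A → E → E) (v : A) : ℕ → E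
  | 0 => 0
  | n + 1 => B v (iterB B v n)

@[simp] theorem iterB_zero {A : Type v} {E : Type u} [Zero E] (B : A → E → E) (v : A) :
    iterB B v 0 = 0 := rfl

@[simp] theorem iterB_succ {A : Type v} {E : Type u} [Zero E] (B : A → E → E) (v : A) (n : ℕ) :
    iterB B v (n + 1) = B v (iterB B v n) := rfl

/-- existence, uniqueness and continuity of the solution germ of an
sc⁰-contraction germ.  `f(v,u) = u - B(v,u)` is a germ near `0` on `V ⊕ E`,
where `V` is a relatively open subset of a partial cone containing `0`; on every
level `m` and near `0`, `B` preserves the level, is continuous, and is a contraction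
in `u` with contraction constant `Θₘ < 1`.  Then there is a germ `δ` with
`δ(v) = B(v, δ(v))`, which on every level `m` is defined near `0`, takes values in
`Eₘ`, is the unique small solution on level `m`, and depends continuously on `v`;
in particular `δ` is an sc⁰-germ. -/
theorem contraction_germ_solution {A : Type v} {E : Type u}
    [NormedAddCommGroup A] [NormedSpace ℝ A] [FiniteDimensional ℝ A]
    [AddCommGroup E] [Module ℝ E]
    (SE : ScScale E) (hSE : SE.IsScBanach)
    (C V : Set A) (hC : IsPartialCone C) (hVC : V ⊆ C)
    (hVopen : ∃ O : Set A, IsOpen O ∧ V = O ∩ C) (h0V : (0:A) ∈ V)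
    (B : A → E → E) (hB00 : B 0 0 = 0)
    -- on every level, near 0, B preserves the level:
    (hBlevel : ∀ m : ℕ, ∃ ε > (0:ℝ), ∀ v ∈ V, ‖v‖ < ε →
      ∀ u ∈ SE.level m, SE.lnorm m u < ε → B v u ∈ SE.level m)
    -- the germ f(v,u) = u - B(v,u) is sc⁰ near 0 (level-wise continuity of B):
    (hBcont : ∀ m : ℕ, ∃ ε > (0:ℝ), ∀ v ∈ V, ‖v‖ < ε →
      ∀ u ∈ SE.level m, SE.lnorm m u < ε → ∀ ε' > (0:ℝ), ∃ δ > (0:ℝ),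
        ∀ w ∈ V, ‖w‖ < ε → ∀ u' ∈ SE.level m, SE.lnorm m u' < ε →
          ‖w - v‖ < δ → SE.lnorm m (u' - u) < δ →
            SE.lnorm m (B w u' - B v u) < ε')
    -- the contraction property on every level near 0:
    (hBcontr : ∀ m : ℕ, ∃ Θ : ℝ, Θ ∈ Set.Ioo (0:ℝ) 1 ∧ ∃ ε > (0:ℝ),
      ∀ v ∈ V, ‖v‖ < ε → ∀ u ∈ SE.level m, ∀ u' ∈ SE.level m,
        SE.lnorm m u < ε → SE.lnorm m u' < ε →
          SE.lnorm m (B v u - B v u') ≤ Θ * SE.lnorm m (u - u')) :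
    ∃ δfn : A → E, ∀ m : ℕ, ∃ ε > (0:ℝ), ∃ ρ > (0:ℝ),
      (∀ v ∈ V, ‖v‖ < ε →
        δfn v ∈ SE.level m ∧ SE.lnorm m (δfn v) < ρ ∧ B v (δfn v) = δfn v ∧
        ∀ u ∈ SE.level m, SE.lnorm m u < ρ → B v u = u → u = δfn v) ∧
      (∀ v ∈ V, ‖v‖ < ε → ∀ ε' > (0:ℝ), ∃ η > (0:ℝ),
        ∀ w ∈ V, ‖w‖ < ε → ‖w - v‖ < η → SE.lnorm m (δfn w - δfn v) < ε') := by

  obtain ⟨hmono, hnn, htri, hsmul, hdef, hcomp, hcompl, -, -⟩ := hSE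
  -- basic norm facts
  have hzero : ∀ m : ℕ, SE.lnorm m (0:E) = 0 := by
    intro m
    have h := hsmul m 0 0 (Submodule.zero_mem _)
    simpa using h
  have hneg : ∀ m : ℕ, ∀ x ∈ SE.level m, SE.lnorm m (-x) = SE.lnorm m x := by
    intro m x hx
    have h := hsmul m (-1) x hx
    simpa using h
  have htri3 : ∀ m : ℕ, ∀ a ∈ SE.level m, ∀ b ∈ SE.level m, ∀ c ∈ SE.level m,
      SE.lnorm m (a - c) ≤ SE.lnorm m (a - b) + SE.lnorm m (b - c) := by
    intro m a ha b hb c hc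
    have h := htri m (a - b) (Submodule.sub_mem _ ha hb) (b - c) (Submodule.sub_mem _ hb hc)
    rwa [sub_add_sub_cancel] at h
  have hzero_eq : ∀ m : ℕ, ∀ x ∈ SE.level m, (∀ ε > (0:ℝ), SE.lnorm m x < ε) → x = 0 := by
    intro m x hx h
    refine hdef m x hx ?_
    by_contra hne
    have hpos : 0 < SE.lnorm m x := lt_of_le_of_ne (hnn m x) (Ne.symm hne)
    exact lt_irrefl _ (h _ hpos)
  -- the per-level Banach fixed point construction
  have main : ∀ m : ℕ, ∃ η > (0:ℝ), ∃ ρ > (0:ℝ),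
      (∀ v ∈ V, ‖v‖ < η → ∃ x, x ∈ SE.level m ∧ SE.lnorm m x < ρ ∧ B v x = x ∧
        (∀ p, iterB B v p ∈ SE.level m) ∧
        (∀ ε > (0:ℝ), ∃ K, ∀ p ≥ K, SE.lnorm m (iterB B v p - x) < ε)) ∧
      (∀ v ∈ V, ‖v‖ < η → ∀ u ∈ SE.level m, SE.lnorm m u < ρ → B v u = u →
        ∀ u' ∈ SE.level m, SE.lnorm m u' < ρ → B v u' = u' → u = u') ∧
      (∀ v ∈ V, ‖v‖ < η → ∀ x ∈ SE.level m, SE.lnorm m x < ρ → B v x = x →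
        ∀ ε' > (0:ℝ), ∃ η' > (0:ℝ), ∀ w ∈ V, ‖w‖ < η → ‖w - v‖ < η' →
          ∀ y ∈ SE.level m, SE.lnorm m y < ρ → B w y = y →
            SE.lnorm m (y - x) < ε') := by
    intro m
    obtain ⟨Θ, ⟨hΘ0, hΘ1⟩, εc, hεc, hcontr⟩ := hBcontr m
    obtain ⟨εl, hεl, hlev⟩ := hBlevel m
    obtain ⟨εk, hεk, hcont⟩ := hBcont m
    set ρ : ℝ := min (min εc εk) εl with hρdef
    have hρ : 0 < ρ := lt_min (lt_min hεc hεk) hεl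
    have hρεc : ρ ≤ εc := le_trans (min_le_left _ _) (min_le_left _ _)
    have hρεk : ρ ≤ εk := le_trans (min_le_left _ _) (min_le_right _ _)
    have hρεl : ρ ≤ εl := min_le_right _ _
    set r : ℝ := ρ / 2 with hrdef
    have hr : 0 < r := by positivity
    have hrρ : r < ρ := by
      rw [hrdef]; linarith
    have h1Θ : 0 < 1 - Θ := by linarith
    -- smallness of `B v 0` for `v` near `0`
    obtain ⟨δ₀, hδ₀, hB0'⟩ := hcont 0 h0V (by simpa using hεk) 0 (Submodule.zero_mem _)
      (by rw [hzero]; exact hεk) ((1 - Θ) * r) (by positivity)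
    have hB0 : ∀ w ∈ V, ‖w‖ < εk → ‖w‖ < δ₀ → SE.lnorm m (B w 0) < (1 - Θ) * r := by
      intro w hw hw1 hw2
      have h := hB0' w hw hw1 0 (Submodule.zero_mem _) (by rw [hzero]; exact hεk)
        (by simpa using hw2) (by rw [sub_zero, hzero]; exact hδ₀)
      rwa [hB00, sub_zero] at h
    refine ⟨min ρ δ₀, lt_min hρ hδ₀, ρ, hρ, ?_, ?_, ?_⟩
    · -- existence of the fixed point as limit of the Picard iterates
      intro v hv hvn
      have hvρ : ‖v‖ < ρ := lt_of_lt_of_le hvn (min_le_left _ _)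
      have hvεc : ‖v‖ < εc := lt_of_lt_of_le hvρ hρεc
      have hvεk : ‖v‖ < εk := lt_of_lt_of_le hvρ hρεk
      have hvεl : ‖v‖ < εl := lt_of_lt_of_le hvρ hρεl
      have hvδ₀ : ‖v‖ < δ₀ := lt_of_lt_of_le hvn (min_le_right _ _)
      have hBv0 : SE.lnorm m (B v 0) < (1 - Θ) * r := hB0 v hv hvεk hvδ₀
      have hBv0mem : B v 0 ∈ SE.level m := hlev v hv hvεl 0 (Submodule.zero_mem _)
        (by rw [hzero]; exact hεl)
      have hu : ∀ n, iterB B v n ∈ SE.level m ∧ SE.lnorm m (iterB B v n) ≤ r := by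
        intro n
        induction n with
        | zero =>
          refine ⟨by rw [iterB_zero]; exact Submodule.zero_mem _, ?_⟩
          rw [iterB_zero, hzero]; exact le_of_lt hr
        | succ n ih =>
          obtain ⟨hmem, hle⟩ := ih
          have hBmem : B v (iterB B v n) ∈ SE.level m :=
            hlev v hv hvεl _ hmem (lt_of_le_of_lt hle (lt_of_lt_of_le hrρ hρεl))
          have hc : SE.lnorm m (B v (iterB B v n) - B v 0) ≤ Θ * SE.lnorm m (iterB B v n) := by
            have h := hcontr v hv hvεc (iterB B v n) hmem 0 (Submodule.zero_mem _)
              (lt_of_le_of_lt hle (lt_of_lt_of_le hrρ hρεc)) (by rw [hzero]; exact hεc)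
            rwa [sub_zero] at h
          refine ⟨by rw [iterB_succ]; exact hBmem, ?_⟩
          have htr := htri3 m (B v (iterB B v n)) hBmem (B v 0) hBv0mem 0 (Submodule.zero_mem _)
          rw [sub_zero, sub_zero] at htr
          have hΘr : Θ * SE.lnorm m (iterB B v n) ≤ Θ * r :=
            mul_le_mul_of_nonneg_left hle (le_of_lt hΘ0)
          rw [iterB_succ]
          calc SE.lnorm m (B v (iterB B v n))
              ≤ SE.lnorm m (B v (iterB B v n) - B v 0) + SE.lnorm m (B v 0) := htr
            _ ≤ Θ * r + (1 - Θ) * r := by linarith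
            _ = r := by ring
      have hdiff : ∀ n, SE.lnorm m (iterB B v (n+1) - iterB B v n) ≤ Θ ^ n * ((1 - Θ) * r) := by
        intro n
        induction n with
        | zero =>
          rw [iterB_succ, iterB_zero, sub_zero, pow_zero, one_mul]
          exact le_of_lt hBv0
        | succ n ih =>
          rw [iterB_succ, iterB_succ]
          have h := hcontr v hv hvεc (iterB B v (n+1)) (hu _).1 (iterB B v n) (hu _).1
            (lt_of_le_of_lt (hu _).2 (lt_of_lt_of_le hrρ hρεc))
            (lt_of_le_of_lt (hu _).2 (lt_of_lt_of_le hrρ hρεc))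
          calc SE.lnorm m (B v (iterB B v (n+1)) - B v (iterB B v n))
              ≤ Θ * SE.lnorm m (iterB B v (n+1) - iterB B v n) := by
                rw [iterB_succ] at h; exact h
            _ ≤ Θ * (Θ ^ n * ((1 - Θ) * r)) := mul_le_mul_of_nonneg_left ih (le_of_lt hΘ0)
            _ = Θ ^ (n+1) * ((1 - Θ) * r) := by ring
      have hgeo : ∀ p k, SE.lnorm m (iterB B v (p + k) - iterB B v p) ≤ Θ ^ p * r * (1 - Θ ^ k) := by
        intro p k
        induction k with
        | zero =>
          rw [Nat.add_zero, sub_self, hzero, pow_zero]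
          have : Θ ^ p * r * (1 - 1) = 0 := by ring
          rw [this]
        | succ k ih =>
          have h1 := hdiff (p + k)
          have htr := htri3 m (iterB B v (p + k + 1)) (hu _).1 (iterB B v (p + k)) (hu _).1
            (iterB B v p) (hu _).1
          have heq : p + (k + 1) = p + k + 1 := rfl
          rw [heq]
          have hexp : Θ ^ (p + k) * ((1 - Θ) * r) + Θ ^ p * r * (1 - Θ ^ k)
              = Θ ^ p * r * (1 - Θ ^ (k + 1)) := by
            rw [pow_add, pow_succ]; ring
          calc SE.lnorm m (iterB B v (p + k + 1) - iterB B v p)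
              ≤ SE.lnorm m (iterB B v (p + k + 1) - iterB B v (p + k))
                + SE.lnorm m (iterB B v (p + k) - iterB B v p) := htr
            _ ≤ Θ ^ (p + k) * ((1 - Θ) * r) + Θ ^ p * r * (1 - Θ ^ k) := by linarith
            _ = Θ ^ p * r * (1 - Θ ^ (k + 1)) := hexp
      have hbound : ∀ p k, SE.lnorm m (iterB B v (p + k) - iterB B v p) ≤ Θ ^ p * r := by
        intro p k
        refine le_trans (hgeo p k) ?_
        have h1 : (0:ℝ) ≤ Θ ^ k := pow_nonneg (le_of_lt hΘ0) _
        have h2 : (0:ℝ) ≤ Θ ^ p * r := mul_nonneg (pow_nonneg (le_of_lt hΘ0) _) (le_of_lt hr)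
        nlinarith
      have hcauchy : ∀ ε > (0:ℝ), ∃ K, ∀ p ≥ K, ∀ q ≥ K,
          SE.lnorm m (iterB B v p - iterB B v q) < ε := by
        intro ε hε
        obtain ⟨K, hK⟩ := exists_pow_lt_of_lt_one (div_pos hε hr) hΘ1
        have hKr : Θ ^ K * r < ε := (lt_div_iff₀ hr).mp hK
        refine ⟨K, ?_⟩
        have key : ∀ a b, K ≤ a → a ≤ b → SE.lnorm m (iterB B v b - iterB B v a) < ε := by
          intro a b ha hab
          obtain ⟨k, rfl⟩ := Nat.exists_eq_add_of_le hab
          calc SE.lnorm m (iterB B v (a + k) - iterB B v a) ≤ Θ ^ a * r := hbound a k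
            _ ≤ Θ ^ K * r := mul_le_mul_of_nonneg_right
                (pow_le_pow_of_le_one (le_of_lt hΘ0) (le_of_lt hΘ1) ha) (le_of_lt hr)
            _ < ε := hKr
        intro p hp q hq
        rcases le_total p q with h | h
        · have hm2 : iterB B v q - iterB B v p ∈ SE.level m :=
            Submodule.sub_mem _ (hu q).1 (hu p).1
          rw [← neg_sub (iterB B v q) (iterB B v p), hneg m _ hm2]
          exact key p q hp h
        · exact key q p hq h
      obtain ⟨x, hxmem, hxlim⟩ := hcompl m (iterB B v) (fun k => (hu k).1) hcauchy
      have hxr : SE.lnorm m x ≤ r := by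
        refine le_of_forall_pos_le_add ?_
        intro ε hε
        obtain ⟨K, hK⟩ := hxlim ε hε
        have h1 := hK K (le_refl K)
        have htr := htri3 m x hxmem (iterB B v K) (hu K).1 0 (Submodule.zero_mem _)
        rw [sub_zero, sub_zero] at htr
        have hneg1 : SE.lnorm m (x - iterB B v K) = SE.lnorm m (iterB B v K - x) := by
          rw [← neg_sub (iterB B v K) x, hneg m _ (Submodule.sub_mem _ (hu K).1 hxmem)]
        rw [hneg1] at htr
        linarith [(hu K).2]
      have hBx_mem : B v x ∈ SE.level m :=
        hlev v hv hvεl x hxmem (lt_of_le_of_lt hxr (lt_of_lt_of_le hrρ hρεl))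
      have hfix : B v x = x := by
        have hz : x - B v x = 0 := by
          refine hzero_eq m _ (Submodule.sub_mem _ hxmem hBx_mem) ?_
          intro ε hε
          obtain ⟨K, hK⟩ := hxlim (ε/2) (by positivity)
          have h1 : SE.lnorm m (x - iterB B v (K+1)) < ε/2 := by
            rw [← neg_sub (iterB B v (K+1)) x,
              hneg m _ (Submodule.sub_mem _ (hu _).1 hxmem)]
            exact hK (K+1) (Nat.le_succ K)
          have h2 : SE.lnorm m (B v (iterB B v K) - B v x) ≤ Θ * SE.lnorm m (iterB B v K - x) :=
            hcontr v hv hvεc (iterB B v K) (hu K).1 x hxmem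
              (lt_of_le_of_lt (hu K).2 (lt_of_lt_of_le hrρ hρεc))
              (lt_of_le_of_lt hxr (lt_of_lt_of_le hrρ hρεc))
          have h3 : SE.lnorm m (iterB B v K - x) < ε/2 := hK K (le_refl K)
          have h4 : Θ * SE.lnorm m (iterB B v K - x) < ε/2 := by
            nlinarith [hnn m (iterB B v K - x)]
          have htr := htri3 m x hxmem (iterB B v (K+1)) (hu _).1 (B v x) hBx_mem
          have h2' : SE.lnorm m (iterB B v (K+1) - B v x) ≤ Θ * SE.lnorm m (iterB B v K - x) := by
            rw [iterB_succ]; exact h2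
          linarith
        have := sub_eq_zero.mp hz
        exact this.symm
      exact ⟨x, hxmem, lt_of_le_of_lt hxr hrρ, hfix, fun p => (hu p).1, hxlim⟩
    · -- uniqueness of small fixed points
      intro v hv hvn u hu hun hufix u' hu' hun' hufix'
      have hvεc : ‖v‖ < εc := lt_of_lt_of_le (lt_of_lt_of_le hvn (min_le_left _ _)) hρεc
      have h := hcontr v hv hvεc u hu u' hu' (lt_of_lt_of_le hun hρεc) (lt_of_lt_of_le hun' hρεc)
      rw [hufix, hufix'] at h
      have hnng := hnn m (u - u')
      have hzz : SE.lnorm m (u - u') = 0 := by nlinarith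
      have := hdef m _ (Submodule.sub_mem _ hu hu') hzz
      exact sub_eq_zero.mp this
    · -- continuity of the fixed point in the parameter
      intro v hv hvn x hx hxρ hxfix ε' hε'
      have hvρ : ‖v‖ < ρ := lt_of_lt_of_le hvn (min_le_left _ _)
      obtain ⟨δ', hδ', hc⟩ := hcont v hv (lt_of_lt_of_le hvρ hρεk) x hx (lt_of_lt_of_le hxρ hρεk)
        ((1 - Θ) * ε') (by positivity)
      refine ⟨δ', hδ', ?_⟩
      intro w hw hwn hwv y hy hyρ hyfix
      have hwρ : ‖w‖ < ρ := lt_of_lt_of_le hwn (min_le_left _ _)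
      have h1 : SE.lnorm m (B w x - B v x) < (1 - Θ) * ε' :=
        hc w hw (lt_of_lt_of_le hwρ hρεk) x hx (lt_of_lt_of_le hxρ hρεk) hwv
          (by rw [sub_self, hzero]; exact hδ')
      rw [hxfix] at h1
      have h2 : SE.lnorm m (B w y - B w x) ≤ Θ * SE.lnorm m (y - x) :=
        hcontr w hw (lt_of_lt_of_le hwρ hρεc) y hy x hx (lt_of_lt_of_le hyρ hρεc)
          (lt_of_lt_of_le hxρ hρεc)
      rw [hyfix] at h2
      have hBwx : B w x ∈ SE.level m :=
        hlev w hw (lt_of_lt_of_le hwρ hρεl) x hx (lt_of_lt_of_le hxρ hρεl)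
      have htr := htri3 m y hy (B w x) hBwx x hx
      nlinarith [hnn m (y - x)]
  -- assemble the solution germ from the level-0 construction
  classical
  obtain ⟨η₀, hη₀, ρ₀, hρ₀, hex₀, huniq₀, hcont₀⟩ := main 0
  have hex₀' : ∀ v : A, ∃ x : E, v ∈ V → ‖v‖ < η₀ →
      x ∈ SE.level 0 ∧ SE.lnorm 0 x < ρ₀ ∧ B v x = x ∧
      (∀ p, iterB B v p ∈ SE.level 0) ∧
      (∀ ε > (0:ℝ), ∃ K, ∀ p ≥ K, SE.lnorm 0 (iterB B v p - x) < ε) := by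
    intro v
    by_cases h : v ∈ V ∧ ‖v‖ < η₀
    · obtain ⟨x, hx⟩ := hex₀ v h.1 h.2
      exact ⟨x, fun _ _ => hx⟩
    · exact ⟨0, fun h1 h2 => absurd ⟨h1, h2⟩ h⟩
  choose δfn hδspec using hex₀'
  refine ⟨δfn, fun m => ?_⟩
  obtain ⟨ηm, hηm, ρm, hρm, hexm, huniqm, hcontm⟩ := main m
  obtain ⟨Cc, hCc, hCcomp⟩ := hcomp 0 m (Nat.zero_le m)
  have hδm : ∀ v, v ∈ V → ‖v‖ < min ηm η₀ →
      δfn v ∈ SE.level m ∧ SE.lnorm m (δfn v) < ρm ∧ B v (δfn v) = δfn v := by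
    intro v hv hvn
    have hv1 : ‖v‖ < ηm := lt_of_lt_of_le hvn (min_le_left _ _)
    have hv0 : ‖v‖ < η₀ := lt_of_lt_of_le hvn (min_le_right _ _)
    obtain ⟨x, hxmem, hxρ, hxfix, hup, hxlim⟩ := hexm v hv hv1
    obtain ⟨hδmem, hδρ, hδfix, hup0, hδlim⟩ := hδspec v hv hv0
    have hxδ : x = δfn v := by
      have hx0 : x ∈ SE.level 0 := hmono (Nat.zero_le m) hxmem
      have hz : x - δfn v = 0 := by
        refine hzero_eq 0 _ (Submodule.sub_mem _ hx0 hδmem) ?_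
        intro ε hε
        have h2Cc : (0:ℝ) < 2 * Cc := by linarith
        obtain ⟨K1, hK1⟩ := hxlim (ε / (2 * Cc)) (div_pos hε h2Cc)
        obtain ⟨K2, hK2⟩ := hδlim (ε / 2) (by positivity)
        have hp1 := hK1 (max K1 K2) (le_max_left _ _)
        have hp2 := hK2 (max K1 K2) (le_max_right _ _)
        set p := max K1 K2
        have hmemp : iterB B v p ∈ SE.level m := hup p
        have h1 : SE.lnorm 0 (x - iterB B v p) < ε / 2 := by
          have hsub : iterB B v p - x ∈ SE.level m := Submodule.sub_mem _ hmemp hxmem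
          have hcomp1 := hCcomp _ hsub
          have hneg1 : SE.lnorm 0 (x - iterB B v p) = SE.lnorm 0 (iterB B v p - x) := by
            rw [← neg_sub (iterB B v p) x, hneg 0 _ (hmono (Nat.zero_le m) hsub)]
          rw [hneg1]
          have hCc' : Cc ≠ 0 := ne_of_gt hCc
          calc SE.lnorm 0 (iterB B v p - x) ≤ Cc * SE.lnorm m (iterB B v p - x) := hcomp1
            _ < Cc * (ε / (2 * Cc)) := mul_lt_mul_of_pos_left hp1 hCc
            _ = ε / 2 := by field_simp
        have htr := htri3 0 x hx0 (iterB B v p) (hmono (Nat.zero_le m) hmemp) (δfn v) hδmem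
        linarith
      exact sub_eq_zero.mp hz
    rw [← hxδ]
    exact ⟨hxmem, hxρ, hxfix⟩
  refine ⟨min ηm η₀, lt_min hηm hη₀, ρm, hρm, ?_, ?_⟩
  · intro v hv hvn
    obtain ⟨h1, h2, h3⟩ := hδm v hv hvn
    refine ⟨h1, h2, h3, ?_⟩
    intro u hu hun hufix
    exact huniqm v hv (lt_of_lt_of_le hvn (min_le_left _ _)) u hu hun hufix (δfn v) h1 h2 h3
  · intro v hv hvn ε' hε'
    have hv1 : ‖v‖ < ηm := lt_of_lt_of_le hvn (min_le_left _ _)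
    obtain ⟨h1, h2, h3⟩ := hδm v hv hvn
    obtain ⟨η', hη', hc⟩ := hcontm v hv hv1 (δfn v) h1 h2 h3 ε' hε'
    refine ⟨η', hη', ?_⟩
    intro w hw hwn hwv
    obtain ⟨g1, g2, g3⟩ := hδm w hw hwn
    exact hc w hw (lt_of_lt_of_le hwn (min_le_left _ _)) hwv (δfn w) g1 g2 g3
end
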